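/- arXiv:math/0107026 — 4 statements merged into one kernel-verified Lean document; each statement's English description precedes it below -/
import Mathlib

section
/- Theorem 1 (main compactness result, case p = ∞): Let U be a bounded subset of L^1(0,T;E_1) such that V = {B∘u : u ∈ U} is a subset of L^∞(0,T;E_2) that is bounded in L^r(0,T;E_2) for some r > 1. Assume the uniform time-translation condition: ‖v(·+h) − v‖_{L^∞(0,T−h;E_2)} → 0 as h → 0⁺, uniformly for v ∈ V. Then V is relatively compact in C([0,T];E_2) (the space of continuous E_2-valued functions with the uniform norm). -/
open MeasureTheory
open scoped ENNReal
open scoped NNReal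

namespace MaitreAux

open Set Metric

/-- A conull subset of `Ioc 0 T` yields a dense subset of the subtype `Icc 0 T`. -/
lemma dense_subtype_of_conull {T : ℝ} (hT : 0 < T) {S : Set ℝ}
    (hS : ∀ᵐ t ∂(volume.restrict (Set.Ioc (0:ℝ) T)), t ∈ S) :
    Dense {x : Set.Icc (0:ℝ) T | (x : ℝ) ∈ S} := by
  rw [Metric.dense_iff]
  rintro ⟨x, hx0, hxT⟩ r hr
  set a := max 0 (x - r) with ha
  set b := min T (x + r) with hb
  have hab : a < b := by
    apply max_lt <;> apply lt_min
    · exact hT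
    · linarith
    · linarith
    · linarith
  have hsub : Set.Ioo a b ⊆ Set.Ioc 0 T := fun w hw =>
    ⟨lt_of_le_of_lt (le_max_left _ _) hw.1, le_trans hw.2.le (min_le_left _ _)⟩
  have hne : (Set.Ioo a b ∩ S).Nonempty := by
    by_contra hcon
    rw [Set.not_nonempty_iff_eq_empty] at hcon
    have hsub2 : Set.Ioo a b ⊆ {t : ℝ | ¬ t ∈ S} := by
      intro w hw hwS
      exact Set.eq_empty_iff_forall_notMem.1 hcon w ⟨hw, hwS⟩
    have h1 : (volume.restrict (Set.Ioc (0:ℝ) T)) (Set.Ioo a b) = 0 :=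
      measure_mono_null hsub2 (ae_iff.1 hS)
    have h2 : (volume.restrict (Set.Ioc (0:ℝ) T)) (Set.Ioo a b) = volume (Set.Ioo a b) := by
      rw [Measure.restrict_apply' measurableSet_Ioc, Set.inter_eq_self_of_subset_left hsub]
    rw [h2, Real.volume_Ioo] at h1
    exact absurd h1 (ENNReal.ofReal_pos.2 (by linarith)).ne'
  obtain ⟨w, hwI, hwS⟩ := hne
  refine ⟨⟨w, ⟨(hsub hwI).1.le, (hsub hwI).2⟩⟩, ?_, hwS⟩
  rw [Metric.mem_ball, Subtype.dist_eq, Real.dist_eq, abs_sub_lt_iff]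
  have h1 : w < x + r := lt_of_lt_of_le hwI.2 (min_le_right _ _)
  have h2 : x - r < w := lt_of_le_of_lt (le_max_right _ _) hwI.1
  constructor <;> linarith

variable {E₂ : Type*} [NormedAddCommGroup E₂] [NormedSpace ℝ E₂] [CompleteSpace E₂]

/-- Construction of a continuous representative with a uniform modulus of continuity. -/
lemma exists_rep {T : ℝ} (hT : 0 < T) (δ : ℕ → ℝ) (hδpos : ∀ n, 0 < δ n)
    (v : ℝ → E₂) (hv : AEStronglyMeasurable v (volume.restrict (Set.Ioc (0:ℝ) T)))
    (hvtrans : ∀ n : ℕ, ∀ h : ℝ, 0 < h → h < δ n →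
      eLpNorm (fun t => v (t + h) - v t) ∞ (volume.restrict (Set.Ioc (0:ℝ) (T - h)))
        ≤ ENNReal.ofReal (1 / ((n : ℝ) + 1))) :
    ∃ f : C(Set.Icc (0:ℝ) T, E₂),
      (∀ᵐ t ∂(volume.restrict (Set.Ioc (0:ℝ) T)),
        ∀ ht : t ∈ Set.Icc (0:ℝ) T, f ⟨t, ht⟩ = v t) ∧
      (∀ n : ℕ, ∀ x y : Set.Icc (0:ℝ) T, dist x y < δ n →
        dist (f x) (f y) ≤ 2 / ((n : ℝ) + 1)) := by
  set μT := volume.restrict (Set.Ioc (0:ℝ) T) with hμT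
  set g : ℝ → E₂ := hv.mk v with hgdef
  have hg : StronglyMeasurable g := hv.stronglyMeasurable_mk
  have hgv : v =ᵐ[μT] g := hv.ae_eq_mk
  set ε : ℕ → ℝ := fun n => 1 / ((n : ℝ) + 1) with hε
  have hεpos : ∀ n : ℕ, 0 < ε n := fun n => by positivity
  -- transfer the translation estimates to `g`
  have step_ae : ∀ n : ℕ, ∀ h : ℝ, 0 < h → h < δ n →
      ∀ᵐ s ∂(volume.restrict (Set.Ioc (0:ℝ) (T - h))), ‖g (s + h) - g s‖ ≤ ε n := by
    intro n h hh hhδ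
    have hsub : Set.Ioc (0:ℝ) (T - h) ⊆ Set.Ioc (0:ℝ) T :=
      Set.Ioc_subset_Ioc le_rfl (by linarith)
    have h1 : v =ᵐ[volume.restrict (Set.Ioc (0:ℝ) (T - h))] g :=
      ae_restrict_of_ae_restrict_of_subset hsub hgv
    have h2 : (fun t => v (t + h)) =ᵐ[volume.restrict (Set.Ioc (0:ℝ) (T - h))]
        (fun t => g (t + h)) := by
      have hM : volume ({t : ℝ | v t ≠ g t} ∩ Set.Ioc (0:ℝ) T) = 0 := by
        have := ae_iff.1 hgv
        rwa [Measure.restrict_apply' measurableSet_Ioc] at this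
      have hM2 : volume ((fun t : ℝ => t + h) ⁻¹' ({t : ℝ | v t ≠ g t} ∩ Set.Ioc (0:ℝ) T)) = 0 :=
        (measurePreserving_add_right volume h).quasiMeasurePreserving.preimage_null hM
      rw [Filter.EventuallyEq, ae_iff, Measure.restrict_apply' measurableSet_Ioc]
      refine measure_mono_null ?_ hM2
      rintro t ⟨htne, ht0, htT⟩
      have hmem : t + h ∈ {t : ℝ | v t ≠ g t} ∩ Set.Ioc (0:ℝ) T :=
        ⟨htne, ⟨by linarith, by linarith⟩⟩
      exact hmem
    have h3 : ∀ᵐ s ∂(volume.restrict (Set.Ioc (0:ℝ) (T - h))),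
        ‖v (s + h) - v s‖ ≤ ε n := by
      have hb : ∀ᵐ (y : ℝ) ∂(volume.restrict (Set.Ioc (0:ℝ) (T - h))),
          (‖v (y + h) - v y‖₊ : ℝ≥0∞) ≤ eLpNormEssSup (fun t => v (t + h) - v t)
            (volume.restrict (Set.Ioc (0:ℝ) (T - h))) := ae_le_eLpNormEssSup
      have hle := hvtrans n h hh hhδ
      rw [eLpNorm_exponent_top] at hle
      filter_upwards [hb] with s hs
      have hc : (‖v (s + h) - v s‖₊ : ℝ≥0∞) ≤ ENNReal.ofReal (ε n) := le_trans hs hle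
      rw [ENNReal.ofReal, ENNReal.coe_le_coe] at hc
      calc ‖v (s + h) - v s‖ = ((‖v (s + h) - v s‖₊ : ℝ≥0) : ℝ) := (coe_nnnorm _).symm
        _ ≤ (((ε n).toNNReal : ℝ≥0) : ℝ) := by exact_mod_cast hc
        _ = ε n := Real.coe_toNNReal _ (hεpos n).le
    filter_upwards [h1, h2, h3] with s hs1 hs2 hs3
    rw [← hs2, ← hs1]
    exact hs3
  -- the planar bad sets
  set S : ℕ → Set (ℝ × ℝ) := fun n =>
    {p : ℝ × ℝ | p.1 ∈ Set.Ioc (0:ℝ) T ∧ p.2 ∈ Set.Ioo 0 (δ n) ∧ p.1 + p.2 ≤ T ∧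
      ε n < ‖g (p.1 + p.2) - g p.1‖} with hSdef
  set S' : ℕ → Set (ℝ × ℝ) := fun n =>
    {p : ℝ × ℝ | p.1 ∈ Set.Ioc (0:ℝ) T ∧ p.2 ∈ Set.Ioo 0 (δ n) ∧ 0 < p.1 - p.2 ∧
      ε n < ‖g p.1 - g (p.1 - p.2)‖} with hS'def
  have hgm1 : Measurable fun p : ℝ × ℝ => ‖g (p.1 + p.2) - g p.1‖ :=
    (((hg.comp_measurable (measurable_fst.add measurable_snd)).sub
      (hg.comp_measurable measurable_fst)).norm).measurable
  have hgm2 : Measurable fun p : ℝ × ℝ => ‖g p.1 - g (p.1 - p.2)‖ :=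
    (((hg.comp_measurable measurable_fst).sub
      (hg.comp_measurable (measurable_fst.sub measurable_snd))).norm).measurable
  have hSm : ∀ n, MeasurableSet (S n) := fun n =>
    ((measurable_fst measurableSet_Ioc).inter ((measurable_snd measurableSet_Ioo).inter
      ((measurableSet_le (measurable_fst.add measurable_snd) measurable_const).inter
        (measurableSet_lt measurable_const hgm1))))
  have hS'm : ∀ n, MeasurableSet (S' n) := fun n =>
    ((measurable_fst measurableSet_Ioc).inter ((measurable_snd measurableSet_Ioo).inter
      ((measurableSet_lt measurable_const (measurable_fst.sub measurable_snd)).inter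
        (measurableSet_lt measurable_const hgm2))))
  -- slices with fixed translation parameter are null
  have slice1 : ∀ n : ℕ, ∀ h : ℝ, volume {s : ℝ | (s, h) ∈ S n} = 0 := by
    intro n h
    by_cases hh : 0 < h ∧ h < δ n
    · have h0 : volume ({s : ℝ | ¬ ‖g (s + h) - g s‖ ≤ ε n} ∩ Set.Ioc (0:ℝ) (T - h)) = 0 := by
        have := ae_iff.1 (step_ae n h hh.1 hh.2)
        rwa [Measure.restrict_apply' measurableSet_Ioc] at this
      refine measure_mono_null ?_ h0
      rintro s ⟨hs1, hs2, hs3, hs4⟩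
      exact ⟨not_le.2 hs4, hs1.1, by linarith⟩
    · have hempty : {s : ℝ | (s, h) ∈ S n} = ∅ := by
        ext s
        simp only [Set.mem_setOf_eq, Set.mem_empty_iff_false, iff_false]
        rintro ⟨_, hs2, _, _⟩
        exact hh ⟨hs2.1, hs2.2⟩
      rw [hempty]; exact measure_empty
  have slice1' : ∀ n : ℕ, ∀ h : ℝ, volume {t : ℝ | (t, h) ∈ S' n} = 0 := by
    intro n h
    by_cases hh : 0 < h ∧ h < δ n
    · have h0 : volume ({s : ℝ | ¬ ‖g (s + h) - g s‖ ≤ ε n} ∩ Set.Ioc (0:ℝ) (T - h)) = 0 := by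
        have := ae_iff.1 (step_ae n h hh.1 hh.2)
        rwa [Measure.restrict_apply' measurableSet_Ioc] at this
      have h0' : volume ((fun t : ℝ => t - h) ⁻¹'
          ({s : ℝ | ¬ ‖g (s + h) - g s‖ ≤ ε n} ∩ Set.Ioc (0:ℝ) (T - h))) = 0 :=
        (measurePreserving_sub_right volume h).quasiMeasurePreserving.preimage_null h0
      refine measure_mono_null ?_ h0'
      rintro t ⟨ht1, ht2, ht3, ht4⟩
      have hmem : t - h ∈ ({s : ℝ | ¬ ‖g (s + h) - g s‖ ≤ ε n} ∩ Set.Ioc (0:ℝ) (T - h)) := by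
        refine ⟨?_, ⟨by linarith, by linarith [ht1.2]⟩⟩
        rw [Set.mem_setOf_eq, sub_add_cancel]
        exact not_le.2 ht4
      exact hmem
    · have hempty : {t : ℝ | (t, h) ∈ S' n} = ∅ := by
        ext t
        simp only [Set.mem_setOf_eq, Set.mem_empty_iff_false, iff_false]
        rintro ⟨_, ht2, _, _⟩
        exact hh ⟨ht2.1, ht2.2⟩
      rw [hempty]; exact measure_empty
  -- Fubini : if all slices in the second variable are null, the product set is null
  have prodzero : ∀ W : Set (ℝ × ℝ), MeasurableSet W →
      (∀ h : ℝ, volume {s : ℝ | (s, h) ∈ W} = 0) → (volume.prod volume) W = 0 := by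
    intro W hWm hWs
    have hWswap : MeasurableSet (Prod.swap ⁻¹' W) := hWm.preimage measurable_swap
    have h1 : (volume.prod volume) (Prod.swap ⁻¹' W) = 0 := by
      rw [Measure.measure_prod_null hWswap]
      exact Filter.Eventually.of_forall fun h => hWs h
    calc (volume.prod volume) W
        = (volume.prod volume) (Prod.swap ⁻¹' (Prod.swap ⁻¹' W)) := by
          rw [Set.preimage_preimage]; simp
      _ = (Measure.map Prod.swap (volume.prod volume)) (Prod.swap ⁻¹' W) :=
          (Measure.map_apply measurable_swap hWswap).symm
      _ = (volume.prod volume) (Prod.swap ⁻¹' W) := by rw [Measure.prod_swap]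
      _ = 0 := h1
  have aeslice : ∀ᵐ s : ℝ ∂(volume : Measure ℝ), ∀ n : ℕ,
      volume {h : ℝ | (s, h) ∈ S n} = 0 ∧ volume {h : ℝ | (s, h) ∈ S' n} = 0 := by
    rw [ae_all_iff]
    intro n
    have h1 := Measure.measure_ae_null_of_prod_null (prodzero (S n) (hSm n) (slice1 n))
    have h2 := Measure.measure_ae_null_of_prod_null (prodzero (S' n) (hS'm n) (slice1' n))
    filter_upwards [h1, h2] with s hs1 hs2
    exact ⟨hs1, hs2⟩
  -- the good set
  set A : Set ℝ := {s : ℝ | s ∈ Set.Ioc (0:ℝ) T ∧ v s = g s ∧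
    ∀ n : ℕ, volume {h : ℝ | (s, h) ∈ S n} = 0 ∧ volume {h : ℝ | (s, h) ∈ S' n} = 0} with hAdef
  have hAae : ∀ᵐ s ∂μT, s ∈ A := by
    filter_upwards [ae_restrict_mem measurableSet_Ioc, hgv, ae_restrict_of_ae aeslice]
      with s h1 h2 h3
    exact ⟨h1, h2, h3⟩
  -- the key two-point estimate on the good set
  have key : ∀ n : ℕ, ∀ s ∈ A, ∀ t ∈ A, |s - t| < δ n → ‖g s - g t‖ ≤ 2 * ε n := by
    have main : ∀ n : ℕ, ∀ s ∈ A, ∀ t ∈ A, s < t → t - s < δ n → ‖g t - g s‖ ≤ 2 * ε n := by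
      intro n s hs t ht hst hstδ
      obtain ⟨hsI, hsv, hsn⟩ := hs
      obtain ⟨htI, htv, htn⟩ := ht
      have bad1 : volume ((fun w : ℝ => w - s) ⁻¹' {h : ℝ | (s, h) ∈ S n}) = 0 :=
        (measurePreserving_sub_right volume s).quasiMeasurePreserving.preimage_null (hsn n).1
      have bad2 : volume ((fun w : ℝ => t - w) ⁻¹' {h : ℝ | (t, h) ∈ S' n}) = 0 := by
        have hmp : MeasurePreserving (fun w : ℝ => t - w) volume volume := by
          have hcomp := (measurePreserving_add_right volume t).comp
            (Measure.measurePreserving_neg (volume : Measure ℝ))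
          have : ((fun x : ℝ => x + t) ∘ Neg.neg) = fun w : ℝ => t - w := by
            funext w; simp [Function.comp, neg_add_eq_sub]
          rwa [this] at hcomp
        exact hmp.quasiMeasurePreserving.preimage_null (htn n).2
      have hIoo : volume (Set.Ioo s t) ≠ 0 := by
        rw [Real.volume_Ioo]; exact (ENNReal.ofReal_pos.2 (by linarith)).ne'
      have hex : ∃ w ∈ Set.Ioo s t, w ∉ (fun w : ℝ => w - s) ⁻¹' {h : ℝ | (s, h) ∈ S n} ∧
          w ∉ (fun w : ℝ => t - w) ⁻¹' {h : ℝ | (t, h) ∈ S' n} := by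
        by_contra hcon
        push_neg at hcon
        apply hIoo
        refine measure_mono_null ?_ (measure_union_null bad1 bad2)
        intro w hw
        rcases em (w ∈ (fun w : ℝ => w - s) ⁻¹' {h : ℝ | (s, h) ∈ S n}) with h | h
        · exact Or.inl h
        · exact Or.inr (hcon w hw h)
      obtain ⟨w, hw, hw1, hw2⟩ := hex
      have e1 : ‖g w - g s‖ ≤ ε n := by
        by_contra hgt
        apply hw1
        have hmem : (s, w - s) ∈ S n := by
          show s ∈ Set.Ioc (0:ℝ) T ∧ w - s ∈ Set.Ioo 0 (δ n) ∧ s + (w - s) ≤ T ∧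
            ε n < ‖g (s + (w - s)) - g s‖
          refine ⟨hsI, ⟨by linarith [hw.1], by linarith [hw.2]⟩, by linarith [hw.2, htI.2], ?_⟩
          rw [add_sub_cancel]
          exact not_le.1 hgt
        exact hmem
      have e2 : ‖g t - g w‖ ≤ ε n := by
        by_contra hgt
        apply hw2
        have hmem : (t, t - w) ∈ S' n := by
          show t ∈ Set.Ioc (0:ℝ) T ∧ t - w ∈ Set.Ioo 0 (δ n) ∧ 0 < t - (t - w) ∧
            ε n < ‖g t - g (t - (t - w))‖
          refine ⟨htI, ⟨by linarith [hw.2], by linarith [hw.1]⟩, by linarith [hw.1, hsI.1], ?_⟩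
          rw [sub_sub_cancel]
          exact not_le.1 hgt
        exact hmem
      have hsplit : g t - g s = (g t - g w) + (g w - g s) := by abel
      rw [hsplit]
      exact le_trans (norm_add_le _ _) (by linarith)
    intro n s hs t ht hd
    rw [abs_sub_lt_iff] at hd
    rcases lt_trichotomy s t with h | h | h
    · rw [norm_sub_rev]
      exact main n s hs t ht h (by linarith [hd.2])
    · subst h
      have h0 : (0:ℝ) ≤ 2 * ε n := by positivity
      simpa using h0
    · exact main n t ht s hs h (by linarith [hd.1])
  -- pass to the subtype
  have hA'dense : Dense {x : Set.Icc (0:ℝ) T | (x : ℝ) ∈ A} := dense_subtype_of_conull hT hAae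
  set A' : Set (Set.Icc (0:ℝ) T) := {x : Set.Icc (0:ℝ) T | (x : ℝ) ∈ A} with hA'def
  set φ : A' → E₂ := fun a => g ((a : Set.Icc (0:ℝ) T) : ℝ) with hφdef
  have hdist : ∀ a b : A', dist a b = |((a : Set.Icc (0:ℝ) T) : ℝ) -
      ((b : Set.Icc (0:ℝ) T) : ℝ)| := by
    intro a b
    rw [Subtype.dist_eq, Subtype.dist_eq, Real.dist_eq]
  have hφuc : UniformContinuous φ := by
    rw [Metric.uniformContinuous_iff]
    intro ε' hε'
    obtain ⟨n, hn⟩ := exists_nat_gt (2 / ε')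
    have h2 : 2 * ε n < ε' := by
      rw [hε]
      rw [div_lt_iff₀ hε'] at hn
      rw [mul_one_div, div_lt_iff₀ (by positivity : (0:ℝ) < (n : ℝ) + 1)]
      nlinarith
    refine ⟨δ n, hδpos n, fun {a b} hab => ?_⟩
    have habs : |((a : Set.Icc (0:ℝ) T) : ℝ) - ((b : Set.Icc (0:ℝ) T) : ℝ)| < δ n := by
      rw [← hdist]; exact hab
    calc dist (φ a) (φ b) = ‖g ((a : Set.Icc (0:ℝ) T) : ℝ) - g ((b : Set.Icc (0:ℝ) T) : ℝ)‖ :=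
        dist_eq_norm _ _
      _ ≤ 2 * ε n := key n _ a.2 _ b.2 habs
      _ < ε' := h2
  have h_e : IsUniformInducing ((↑) : A' → Set.Icc (0:ℝ) T) :=
    isUniformEmbedding_subtype_val.isUniformInducing
  have h_dense : DenseRange ((↑) : A' → Set.Icc (0:ℝ) T) := hA'dense.denseRange_val
  set f₀ : Set.Icc (0:ℝ) T → E₂ := (h_e.isDenseInducing h_dense).extend φ with hf₀def
  have hf₀uc : UniformContinuous f₀ := uniformContinuous_uniformly_extend h_e h_dense hφuc
  have hf₀eq : ∀ a : A', f₀ ↑a = g ((a : Set.Icc (0:ℝ) T) : ℝ) := fun a =>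
    uniformly_extend_of_ind h_e h_dense hφuc a
  -- the modulus of continuity for `f₀`
  have hmod : ∀ n : ℕ, ∀ x y : Set.Icc (0:ℝ) T, dist x y < δ n →
      dist (f₀ x) (f₀ y) ≤ 2 / ((n : ℝ) + 1) := by
    intro n x y hxy
    have h2ε : 2 / ((n : ℝ) + 1) = 2 * ε n := by rw [hε]; rw [mul_one_div]
    rw [h2ε]
    refine le_of_forall_pos_le_add fun ε' hε' => ?_
    obtain ⟨ρx, hρx, hballx⟩ := Metric.continuousAt_iff.1 hf₀uc.continuous.continuousAt (ε' / 2)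
      (by positivity)
    obtain ⟨ρy, hρy, hbally⟩ := Metric.continuousAt_iff.1
      (hf₀uc.continuous.continuousAt (x := y)) (ε' / 2) (by positivity)
    set η := (δ n - dist x y) / 2 with hηdef
    have hηpos : 0 < η := by
      have := dist_nonneg (x := x) (y := y)
      rw [hηdef]; linarith
    obtain ⟨a, haball, haA⟩ := Metric.dense_iff.1 hA'dense x (min ρx η) (lt_min hρx hηpos)
    obtain ⟨b, hbball, hbA⟩ := Metric.dense_iff.1 hA'dense y (min ρy η) (lt_min hρy hηpos)
    have hax : dist a x < min ρx η := Metric.mem_ball.1 haball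
    have hby : dist b y < min ρy η := Metric.mem_ball.1 hbball
    have hab : dist a b < δ n := by
      calc dist a b ≤ dist a x + dist x y + dist y b := dist_triangle4 a x y b
        _ < η + dist x y + η := by
            have h1 : dist a x < η := lt_of_lt_of_le hax (min_le_right _ _)
            have h2 : dist y b < η := by
              rw [dist_comm]; exact lt_of_lt_of_le hby (min_le_right _ _)
            linarith
        _ = δ n := by rw [hηdef]; ring
    have hgab : dist (f₀ a) (f₀ b) ≤ 2 * ε n := by
      rw [hf₀eq ⟨a, haA⟩, hf₀eq ⟨b, hbA⟩, dist_eq_norm]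
      refine key n _ haA _ hbA ?_
      rw [← Real.dist_eq, ← Subtype.dist_eq]
      exact hab
    have hfx : dist (f₀ a) (f₀ x) < ε' / 2 := hballx (lt_of_lt_of_le hax (min_le_left _ _))
    have hfy : dist (f₀ b) (f₀ y) < ε' / 2 := hbally (lt_of_lt_of_le hby (min_le_left _ _))
    calc dist (f₀ x) (f₀ y) ≤ dist (f₀ x) (f₀ a) + dist (f₀ a) (f₀ b) + dist (f₀ b) (f₀ y) :=
        dist_triangle4 _ _ _ _
      _ ≤ ε' / 2 + 2 * ε n + ε' / 2 := by
          rw [dist_comm (f₀ x) (f₀ a)]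
          linarith
      _ = 2 * ε n + ε' := by ring
  -- the a.e. representation
  have hrep : ∀ᵐ t ∂μT, ∀ ht : t ∈ Set.Icc (0:ℝ) T, f₀ ⟨t, ht⟩ = v t := by
    filter_upwards [hAae] with t htA
    intro ht
    have hmem : (⟨t, ht⟩ : Set.Icc (0:ℝ) T) ∈ A' := htA
    rw [hf₀eq ⟨⟨t, ht⟩, hmem⟩]
    exact htA.2.1.symm
  exact ⟨⟨f₀, hf₀uc.continuous⟩, hrep, hmod⟩

end MaitreAux


/-- **Theorem 1 of Maitre (case p = ∞).**
Let `U` be a bounded subset of `L¹(0,T;E₁)` such that `V = B(U)` is a subset of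
`L^∞(0,T;E₂)` bounded in `L^r(0,T;E₂)` with `r > 1`.  If the time translates of
elements of `V` converge to them in `L^∞`, uniformly on `V`, then every element
of `V` has a continuous representative on `[0,T]` and the set of these
representatives is relatively compact in `C([0,T];E₂)`. -/
theorem maitre_theorem1_p_eq_top
    {E₁ E₂ : Type*} [NormedAddCommGroup E₁] [NormedSpace ℝ E₁] [CompleteSpace E₁]
    [NormedAddCommGroup E₂] [NormedSpace ℝ E₂] [CompleteSpace E₂]
    (T : ℝ) (hT : 0 < T)
    (B : E₁ → E₂)
    (hB : ∀ s : Set E₁, Bornology.IsBounded s → IsCompact (closure (B '' s)))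
    (U : Set (ℝ → E₁))
    -- `U` is a bounded subset of `L¹(0,T;E₁)`
    (hU1 : ∀ u ∈ U, MemLp u 1 (volume.restrict (Set.Ioc 0 T)))
    (hUbdd : ∃ C : ℝ, ∀ u ∈ U, eLpNorm u 1 (volume.restrict (Set.Ioc 0 T)) ≤ ENNReal.ofReal C)
    -- `V = B(U)` is a subset of `L^∞(0,T;E₂)`
    (hVp : ∀ u ∈ U, MemLp (B ∘ u) ∞ (volume.restrict (Set.Ioc 0 T)))
    -- `V` is bounded in `L^r(0,T;E₂)` for some `r > 1`
    (r : ℝ≥0∞) (hr : 1 < r)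
    (hVr : ∀ u ∈ U, MemLp (B ∘ u) r (volume.restrict (Set.Ioc 0 T)))
    (hVrbdd : ∃ C : ℝ, ∀ u ∈ U,
      eLpNorm (B ∘ u) r (volume.restrict (Set.Ioc 0 T)) ≤ ENNReal.ofReal C)
    -- uniform convergence of time translates in `L^∞(0,T-h;E₂)`
    (htrans : ∀ ε > 0, ∃ δ > 0, ∀ h : ℝ, 0 < h → h < δ → ∀ u ∈ U,
      eLpNorm (fun t => B (u (t + h)) - B (u t)) ∞ (volume.restrict (Set.Ioc 0 (T - h)))
        ≤ ENNReal.ofReal ε) :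
    (∀ u ∈ U, ∃ f : C(Set.Icc (0:ℝ) T, E₂),
      ∀ᵐ t ∂(volume.restrict (Set.Ioc (0:ℝ) T)),
        ∀ ht : t ∈ Set.Icc (0:ℝ) T, f ⟨t, ht⟩ = B (u t)) ∧
    IsCompact (closure {f : C(Set.Icc (0:ℝ) T, E₂) |
      ∃ u ∈ U, ∀ᵐ t ∂(volume.restrict (Set.Ioc (0:ℝ) T)),
        ∀ ht : t ∈ Set.Icc (0:ℝ) T, f ⟨t, ht⟩ = B (u t)}) := by
  classical
  obtain ⟨C, hC⟩ := hUbdd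
  set μT := volume.restrict (Set.Ioc (0:ℝ) T) with hμTdef
  set C₀ := max C 0 with hC₀def
  have hC₀nn : 0 ≤ C₀ := le_max_right _ _
  have hC₀ : ∀ u ∈ U, eLpNorm u 1 μT ≤ ENNReal.ofReal C₀ := fun u hu =>
    le_trans (hC u hu) (ENNReal.ofReal_le_ofReal (le_max_left _ _))
  have hδex : ∀ n : ℕ, ∃ d : ℝ, 0 < d ∧ ∀ h : ℝ, 0 < h → h < d → ∀ u ∈ U,
      eLpNorm (fun t => B (u (t + h)) - B (u t)) ∞ (volume.restrict (Set.Ioc 0 (T - h)))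
        ≤ ENNReal.ofReal (1 / ((n : ℝ) + 1)) := by
    intro n
    obtain ⟨d, hd, hdp⟩ := htrans (1 / ((n : ℝ) + 1)) (by positivity)
    exact ⟨d, hd, hdp⟩
  choose δ hδpos hδ using hδex
  have key : ∀ u ∈ U, ∃ f : C(Set.Icc (0:ℝ) T, E₂),
      (∀ᵐ t ∂μT, ∀ ht : t ∈ Set.Icc (0:ℝ) T, f ⟨t, ht⟩ = B (u t)) ∧
      (∀ n : ℕ, ∀ x y : Set.Icc (0:ℝ) T, dist x y < δ n →
        dist (f x) (f y) ≤ 2 / ((n : ℝ) + 1)) := by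
    intro u hu
    exact MaitreAux.exists_rep hT δ hδpos (fun t => B (u t)) (hVp u hu).1
      (fun n h h1 h2 => hδ n h h1 h2 u hu)
  constructor
  · intro u hu
    obtain ⟨f, hf, -⟩ := key u hu
    exact ⟨f, hf⟩
  set F : Set C(Set.Icc (0:ℝ) T, E₂) := {f : C(Set.Icc (0:ℝ) T, E₂) |
      ∃ u ∈ U, ∀ᵐ t ∂μT, ∀ ht : t ∈ Set.Icc (0:ℝ) T, f ⟨t, ht⟩ = B (u t)} with hFdef
  -- every member of `F` satisfies the uniform modulus of continuity
  have hFmod : ∀ f ∈ F, ∀ n : ℕ, ∀ x y : Set.Icc (0:ℝ) T, dist x y < δ n →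
      dist (f x) (f y) ≤ 2 / ((n : ℝ) + 1) := by
    rintro f ⟨u, hu, hfae⟩ n x y hxy
    obtain ⟨f₀, hae₀, hmod₀⟩ := key u hu
    have hset : ∀ᵐ t ∂μT, t ∈ {s : ℝ |
        ∀ ht : s ∈ Set.Icc (0:ℝ) T, f ⟨s, ht⟩ = f₀ ⟨s, ht⟩} := by
      filter_upwards [hfae, hae₀] with s h2 h3
      exact fun ht => (h2 ht).trans (h3 ht).symm
    have hden := MaitreAux.dense_subtype_of_conull hT hset
    have heq : ⇑f = ⇑f₀ := by
      refine Continuous.ext_on hden f.continuous f₀.continuous ?_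
      rintro ⟨s, hs⟩ hmem
      exact hmem hs
    rw [heq]
    exact hmod₀ n x y hxy
  -- equicontinuity
  have hFeq : Equicontinuous
      (DFunLike.coe ∘ (Subtype.val : F → C(Set.Icc (0:ℝ) T, E₂))) := by
    intro x
    rw [Metric.equicontinuousAt_iff]
    intro ε' hε'
    obtain ⟨n, hn⟩ := exists_nat_gt (2 / ε')
    have h2 : 2 / ((n : ℝ) + 1) < ε' := by
      rw [div_lt_iff₀ hε'] at hn
      rw [div_lt_iff₀ (by positivity : (0:ℝ) < (n : ℝ) + 1)]
      nlinarith
    refine ⟨δ n, hδpos n, fun y hy i => ?_⟩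
    refine lt_of_le_of_lt (hFmod i.1 i.2 n x y ?_) h2
    rwa [dist_comm] at hy
  -- pointwise relative compactness
  have hpt : ∀ x : Set.Icc (0:ℝ) T, ∃ Q : Set E₂, IsCompact Q ∧ ∀ f ∈ F, f x ∈ Q := by
    intro x
    have htb : TotallyBounded ((fun f : C(Set.Icc (0:ℝ) T, E₂) => f x) '' F) := by
      rw [Metric.totallyBounded_iff]
      intro ε' hε'
      obtain ⟨n, hn⟩ := exists_nat_gt (2 / (ε' / 3))
      have h2 : 2 / ((n : ℝ) + 1) < ε' / 3 := by
        rw [div_lt_iff₀ (by positivity : (0:ℝ) < ε' / 3)] at hn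
        rw [div_lt_iff₀ (by positivity : (0:ℝ) < (n : ℝ) + 1)]
        nlinarith
      set m := min (δ n) T with hmdef
      have hmpos : 0 < m := lt_min (hδpos n) hT
      set R := C₀ / m + 1 with hRdef
      have hRpos : 0 < R := by positivity
      have hCRm : C₀ / R < m := by
        rw [div_lt_iff₀ hRpos, hRdef]
        have hmne : m ≠ 0 := hmpos.ne'
        have : m * (C₀ / m + 1) = C₀ + m := by field_simp
        rw [this]
        linarith
      have hK : IsCompact (closure (B '' Metric.closedBall 0 R)) :=
        hB _ Metric.isBounded_closedBall
      have hclose : ∀ f ∈ F, ∃ z ∈ closure (B '' Metric.closedBall 0 R),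
          dist (f x) z ≤ ε' / 3 := by
        rintro f ⟨u, hu, hfae⟩
        -- Markov inequality
        have hmark : μT {s : ℝ | ENNReal.ofReal R ≤ (‖u s‖₊ : ℝ≥0∞)} ≤
            ENNReal.ofReal (C₀ / R) := by
          have hm1 : ENNReal.ofReal R * μT {s : ℝ | ENNReal.ofReal R ≤ (‖u s‖₊ : ℝ≥0∞)} ≤
              ∫⁻ s, (‖u s‖₊ : ℝ≥0∞) ∂μT :=
            mul_meas_ge_le_lintegral₀ (hU1 u hu).1.enorm _
          have hm2 : (∫⁻ s, (‖u s‖₊ : ℝ≥0∞) ∂μT) ≤ ENNReal.ofReal C₀ := by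
            exact (eLpNorm_one_eq_lintegral_enorm (f := u) (μ := μT)).symm.le.trans (hC₀ u hu)
          have hm3 : μT {s : ℝ | ENNReal.ofReal R ≤ (‖u s‖₊ : ℝ≥0∞)} * ENNReal.ofReal R ≤
              ENNReal.ofReal C₀ := by
            rw [mul_comm]; exact le_trans hm1 hm2
          rw [ENNReal.ofReal_div_of_pos hRpos]
          exact (ENNReal.le_div_iff_mul_le (Or.inl (ENNReal.ofReal_pos.2 hRpos).ne')
            (Or.inl ENNReal.ofReal_ne_top)).2 hm3
        -- find a good point near x
        have hx0 : (0:ℝ) ≤ (x : ℝ) := x.2.1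
        have hxT : (x : ℝ) ≤ T := x.2.2
        set a := max 0 ((x : ℝ) - δ n) with hadef
        set b := min T ((x : ℝ) + δ n) with hbdef
        have hab : m ≤ b - a := by
          rcases le_or_gt ((x : ℝ) - δ n) 0 with h | h
          · have ha : a = 0 := max_eq_left h
            rw [ha, sub_zero, hbdef]
            rcases le_total T ((x : ℝ) + δ n) with h' | h'
            · rw [min_eq_left h']; exact min_le_right _ _
            · rw [min_eq_right h']
              exact le_trans (min_le_left _ _) (by linarith)
          · have ha : a = (x : ℝ) - δ n := max_eq_right h.le
            rcases le_total ((x : ℝ) + δ n) T with h' | h'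
            · rw [ha, hbdef, min_eq_right h']
              have : m ≤ δ n := min_le_left _ _
              linarith
            · rw [ha, hbdef, min_eq_left h']
              have : m ≤ δ n := min_le_left _ _
              linarith
        have habpos : a < b := by linarith
        have hJsub : Set.Ioo a b ⊆ Set.Ioc 0 T := fun w hw =>
          ⟨lt_of_le_of_lt (le_max_left _ _) hw.1, le_trans hw.2.le (min_le_left _ _)⟩
        have hJvol : ENNReal.ofReal m ≤ μT (Set.Ioo a b) := by
          rw [hμTdef, Measure.restrict_apply measurableSet_Ioo,
            Set.inter_eq_self_of_subset_left hJsub, Real.volume_Ioo]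
          exact ENNReal.ofReal_le_ofReal hab
        have hbadf : μT {s : ℝ | ¬ ∀ ht : s ∈ Set.Icc (0:ℝ) T, f ⟨s, ht⟩ = B (u s)} = 0 :=
          ae_iff.1 hfae
        have hex : ∃ s ∈ Set.Ioo a b, ¬ (ENNReal.ofReal R ≤ (‖u s‖₊ : ℝ≥0∞)) ∧
            (∀ ht : s ∈ Set.Icc (0:ℝ) T, f ⟨s, ht⟩ = B (u s)) := by
          by_contra hcon
          push_neg at hcon
          have hsubbad : Set.Ioo a b ⊆ {s : ℝ | ENNReal.ofReal R ≤ (‖u s‖₊ : ℝ≥0∞)} ∪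
              {s : ℝ | ¬ ∀ ht : s ∈ Set.Icc (0:ℝ) T, f ⟨s, ht⟩ = B (u s)} := by
            intro s hs
            rcases em (ENNReal.ofReal R ≤ (‖u s‖₊ : ℝ≥0∞)) with h | h
            · exact Or.inl h
            · refine Or.inr ?_
              intro hall
              obtain ⟨ht', hne⟩ := hcon s hs (not_le.1 h)
              exact hne (hall ht')
          have hlt : μT (Set.Ioo a b) < ENNReal.ofReal m := by
            calc μT (Set.Ioo a b) ≤ μT ({s : ℝ | ENNReal.ofReal R ≤ (‖u s‖₊ : ℝ≥0∞)} ∪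
                {s : ℝ | ¬ ∀ ht : s ∈ Set.Icc (0:ℝ) T, f ⟨s, ht⟩ = B (u s)}) :=
                measure_mono hsubbad
              _ ≤ μT {s : ℝ | ENNReal.ofReal R ≤ (‖u s‖₊ : ℝ≥0∞)} +
                  μT {s : ℝ | ¬ ∀ ht : s ∈ Set.Icc (0:ℝ) T, f ⟨s, ht⟩ = B (u s)} :=
                measure_union_le _ _
              _ ≤ ENNReal.ofReal (C₀ / R) + 0 := by
                  exact add_le_add hmark (le_of_eq hbadf)
              _ = ENNReal.ofReal (C₀ / R) := by rw [add_zero]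
              _ < ENNReal.ofReal m := (ENNReal.ofReal_lt_ofReal_iff hmpos).2 hCRm
          exact absurd (lt_of_le_of_lt hJvol hlt) (lt_irrefl _)
        obtain ⟨s, hsJ, hsR, hsf⟩ := hex
        have hsIoc : s ∈ Set.Ioc (0:ℝ) T := hJsub hsJ
        have hsIcc : s ∈ Set.Icc (0:ℝ) T := ⟨hsIoc.1.le, hsIoc.2⟩
        have hsnorm : ‖u s‖ ≤ R := by
          rw [not_le] at hsR
          rw [show ((‖u s‖₊ : ℝ≥0∞)) = ENNReal.ofReal ‖u s‖ from (ofReal_norm (u s)).symm] at hsR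
          exact ((ENNReal.ofReal_lt_ofReal_iff_of_nonneg (norm_nonneg _)).1 hsR).le
        refine ⟨f ⟨s, hsIcc⟩, ?_, ?_⟩
        · rw [hsf hsIcc]
          exact subset_closure ⟨u s, by
            simpa [Metric.mem_closedBall, dist_zero_right] using hsnorm, rfl⟩
        · have hdxs : dist x (⟨s, hsIcc⟩ : Set.Icc (0:ℝ) T) < δ n := by
            rw [Subtype.dist_eq, Real.dist_eq, abs_sub_lt_iff]
            have h1 : s < (x : ℝ) + δ n := lt_of_lt_of_le hsJ.2 (min_le_right _ _)
            have h2 : (x : ℝ) - δ n < s := lt_of_le_of_lt (le_max_right _ _) hsJ.1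
            constructor <;> linarith
          exact le_trans (hFmod f ⟨u, hu, hfae⟩ n x ⟨s, hsIcc⟩ hdxs) h2.le
      obtain ⟨t, htfin, htcov⟩ := Metric.totallyBounded_iff.1 hK.totallyBounded (ε' / 2)
        (by positivity)
      refine ⟨t, htfin, ?_⟩
      rintro y ⟨f, hfF, rfl⟩
      obtain ⟨z, hzK, hdz⟩ := hclose f hfF
      have hz2 := htcov hzK
      rw [Set.mem_iUnion₂] at hz2
      obtain ⟨c, hc, hzc⟩ := hz2
      rw [Set.mem_iUnion₂]
      refine ⟨c, hc, ?_⟩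
      rw [Metric.mem_ball]
      rw [Metric.mem_ball] at hzc
      calc dist (f x) c ≤ dist (f x) z + dist z c := dist_triangle _ _ _
        _ < ε' / 3 + ε' / 2 := by
            have := hdz
            exact add_lt_add_of_le_of_lt this hzc
        _ < ε' := by linarith
    exact ⟨closure ((fun f : C(Set.Icc (0:ℝ) T, E₂) => f x) '' F),
      TotallyBounded.isCompact_of_isClosed htb.closure isClosed_closure,
      fun f hf => subset_closure ⟨f, hf, rfl⟩⟩
  -- the closed embedding into `UniformOnFun`
  have hclemb : Topology.IsClosedEmbedding
      ((UniformOnFun.ofFun {K : Set (Set.Icc (0:ℝ) T) | IsCompact K}) ∘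
        (DFunLike.coe : C(Set.Icc (0:ℝ) T, E₂) → (Set.Icc (0:ℝ) T → E₂))) := by
    refine ⟨ContinuousMap.isUniformEmbedding_toUniformOnFunIsCompact.isEmbedding, ?_⟩
    have hrange : Set.range ((UniformOnFun.ofFun {K : Set (Set.Icc (0:ℝ) T) | IsCompact K}) ∘
        (DFunLike.coe : C(Set.Icc (0:ℝ) T, E₂) → (Set.Icc (0:ℝ) T → E₂))) =
        {f : UniformOnFun (Set.Icc (0:ℝ) T) E₂ {K : Set (Set.Icc (0:ℝ) T) | IsCompact K} |
          Continuous (UniformOnFun.toFun _ f)} :=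
      ContinuousMap.range_toUniformOnFunIsCompact
    rw [hrange]
    exact UniformOnFun.isClosed_setOf_continuous
      CompactlyCoherentSpace.isCoherentWith
  -- Arzelà–Ascoli
  exact ArzelaAscoli.isCompact_closure_of_isClosedEmbedding (fun K hK => hK) hclemb
    (fun K hK => (hFeq.equicontinuousOn K))
    (fun K hK x hx => (hpt x).imp fun Q hQ => ⟨hQ.1, fun i hi => hQ.2 i hi⟩)
end

section
/- Key intermediate claim in the proof of Theorem 1: Let U be a bounded subset of L^1(0,T;E_1) such that V = {B∘u : u ∈ U} is a subset of L^p(0,T;E_2) that is bounded in L^r(0,T;E_2) for some r > 1, and assume ‖v(·+h) − v‖_{L^p(0,T−h;E_2)} → 0 as h → 0⁺ uniformly for v ∈ V. Then for every pair (t_1,t_2) with 0 < t_1 < t_2 < T, the set K = { ∫_{t_1}^{t_2} v(t) dt : v ∈ V } is relatively compact in E_2. -/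
open MeasureTheory
open scoped ENNReal

set_option maxHeartbeats 1000000

/-- If every point of `K` is within `ε` of some compact set (depending on `ε`),
then `K` is totally bounded. -/
lemma totallyBounded_of_near_compact {X : Type*} [MetricSpace X] {K : Set X}
    (h : ∀ ε > (0 : ℝ), ∃ Q : Set X, IsCompact Q ∧ ∀ x ∈ K, ∃ y ∈ Q, dist x y ≤ ε) :
    TotallyBounded K := by
  rw [Metric.totallyBounded_iff]
  intro ε hε
  obtain ⟨Q, hQ, hnear⟩ := h (ε / 3) (by positivity)
  obtain ⟨t, ht, hcover⟩ :=
    Metric.totallyBounded_iff.mp hQ.totallyBounded (ε / 3) (by positivity)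
  refine ⟨t, ht, fun x hx => ?_⟩
  obtain ⟨y, hyQ, hxy⟩ := hnear x hx
  obtain ⟨z, hz, hyz⟩ := Set.mem_iUnion₂.mp (hcover hyQ)
  refine Set.mem_iUnion₂.mpr ⟨z, hz, ?_⟩
  have : dist x z ≤ dist x y + dist y z := dist_triangle x y z
  have hyz' : dist y z < ε / 3 := Metric.mem_ball.mp hyz
  exact Metric.mem_ball.mpr (by linarith)

/-- **Key intermediate claim in the proof of Theorem 1 of Maitre.**
Under the hypotheses of Theorem 1, for every `0 < t₁ < t₂ < T` the set
`K = { ∫_{t₁}^{t₂} v(t) dt : v ∈ V }` of Bochner integrals is relatively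
compact in `E₂`. -/
theorem maitre_K_relatively_compact
    {E₁ E₂ : Type*} [NormedAddCommGroup E₁] [NormedSpace ℝ E₁] [CompleteSpace E₁]
    [NormedAddCommGroup E₂] [NormedSpace ℝ E₂] [CompleteSpace E₂]
    (T : ℝ) (hT : 0 < T) (p : ℝ≥0∞) (hp : 1 ≤ p)
    (B : E₁ → E₂)
    (hB : ∀ s : Set E₁, Bornology.IsBounded s → IsCompact (closure (B '' s)))
    (U : Set (ℝ → E₁))
    -- `U` is a bounded subset of `L¹(0,T;E₁)`
    (hU1 : ∀ u ∈ U, MemLp u 1 (volume.restrict (Set.Ioc 0 T)))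
    (hUbdd : ∃ C : ℝ, ∀ u ∈ U, eLpNorm u 1 (volume.restrict (Set.Ioc 0 T)) ≤ ENNReal.ofReal C)
    -- `V = B(U)` is a subset of `L^p(0,T;E₂)`
    (hVp : ∀ u ∈ U, MemLp (B ∘ u) p (volume.restrict (Set.Ioc 0 T)))
    -- `V` is bounded in `L^r(0,T;E₂)` for some `r > 1`
    (r : ℝ≥0∞) (hr : 1 < r)
    (hVr : ∀ u ∈ U, MemLp (B ∘ u) r (volume.restrict (Set.Ioc 0 T)))
    (hVrbdd : ∃ C : ℝ, ∀ u ∈ U,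
      eLpNorm (B ∘ u) r (volume.restrict (Set.Ioc 0 T)) ≤ ENNReal.ofReal C)
    -- uniform convergence of time translates in `L^p(0,T-h;E₂)`
    (htrans : ∀ ε > 0, ∃ δ > 0, ∀ h : ℝ, 0 < h → h < δ → ∀ u ∈ U,
      eLpNorm (fun t => B (u (t + h)) - B (u t)) p (volume.restrict (Set.Ioc 0 (T - h)))
        ≤ ENNReal.ofReal ε) :
    ∀ t₁ t₂ : ℝ, 0 < t₁ → t₁ < t₂ → t₂ < T →
      IsCompact (closure {x : E₂ | ∃ u ∈ U, x = ∫ t in Set.Ioc t₁ t₂, B (u t)}) := by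
  intro t₁ t₂ ht₁ ht₁₂ ht₂
  set ν₀ : Measure ℝ := volume.restrict (Set.Ioc 0 T) with hν₀def
  obtain ⟨Cu₀, hCu₀⟩ := hUbdd
  obtain ⟨Cr₀, hCr₀⟩ := hVrbdd
  set Cu : ℝ := max Cu₀ 0 with hCudef
  set Cr : ℝ := max Cr₀ 0 with hCrdef
  have hCu : ∀ u ∈ U, eLpNorm u 1 ν₀ ≤ ENNReal.ofReal Cu := fun u hu =>
    (hCu₀ u hu).trans (ENNReal.ofReal_le_ofReal (le_max_left _ _))
  have hCr : ∀ u ∈ U, eLpNorm (B ∘ u) r ν₀ ≤ ENNReal.ofReal Cr := fun u hu =>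
    (hCr₀ u hu).trans (ENNReal.ofReal_le_ofReal (le_max_left _ _))
  have hCu0 : 0 ≤ Cu := le_max_right _ _
  have hCr0 : 0 ≤ Cr := le_max_right _ _
  -- the exponent `e = 1 - 1/r`
  set e : ℝ := 1 - 1 / r.toReal with hedef
  have he : 0 < e := by
    rw [hedef]
    rcases eq_or_ne r ∞ with hrt | hrt
    · simp [hrt]
    · have h1 : (1 : ℝ) < r.toReal := by
        have := (ENNReal.toReal_lt_toReal (by simp) hrt).mpr hr
        simpa using this
      have : 1 / r.toReal < 1 := by
        rw [div_lt_one (by linarith)]; exact h1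
      linarith
  -- measures
  set ν : Measure ℝ := volume.restrict (Set.Ioc t₁ t₂) with hνdef
  have hsub : Set.Ioc t₁ t₂ ⊆ Set.Ioc 0 T :=
    Set.Ioc_subset_Ioc (le_of_lt ht₁) (le_of_lt ht₂)
  have hν_le : ν ≤ ν₀ := Measure.restrict_mono hsub le_rfl
  haveI hνfin : IsFiniteMeasure ν := by
    constructor
    rw [hνdef, Measure.restrict_apply_univ, Real.volume_Ioc]
    exact ENNReal.ofReal_lt_top
  -- reduce to total boundedness
  apply TotallyBounded.isCompact_of_isClosed _ isClosed_closure
  apply TotallyBounded.closure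
  apply totallyBounded_of_near_compact
  intro ε hε
  -- choose the constants
  set δ : ℝ := (ε / (Cr + 1)) ^ (1 / e) with hδdef
  have hδ : 0 < δ := Real.rpow_pos_of_pos (by positivity) _
  set M : ℝ := max (Cu / δ) 1 with hMdef
  have hM1 : (1 : ℝ) ≤ M := le_max_right _ _
  have hM : 0 < M := lt_of_lt_of_le one_pos hM1
  -- the key numeric estimate
  have hkey : ENNReal.ofReal Cr * (ENNReal.ofReal Cu / ENNReal.ofReal M) ^ e
      ≤ ENNReal.ofReal ε := by
    have hstep1 : ENNReal.ofReal Cu / ENNReal.ofReal M = ENNReal.ofReal (Cu / M) := by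
      rw [ENNReal.ofReal_div_of_pos hM]
    have hCuM : Cu / M ≤ δ := by
      rw [div_le_iff₀ hM]
      have h1 : Cu / δ ≤ M := le_max_left _ _
      calc Cu = Cu / δ * δ := by field_simp
        _ ≤ M * δ := mul_le_mul_of_nonneg_right h1 hδ.le
        _ = δ * M := mul_comm _ _
    have hstep2 : (ENNReal.ofReal (Cu / M)) ^ e ≤ ENNReal.ofReal (δ ^ e) := by
      rw [← ENNReal.ofReal_rpow_of_nonneg (by positivity) he.le]
      exact ENNReal.rpow_le_rpow (ENNReal.ofReal_le_ofReal hCuM) he.le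
    have hδe : δ ^ e = ε / (Cr + 1) := by
      rw [hδdef, ← Real.rpow_mul (by positivity), one_div_mul_cancel he.ne',
        Real.rpow_one]
    calc ENNReal.ofReal Cr * (ENNReal.ofReal Cu / ENNReal.ofReal M) ^ e
        ≤ ENNReal.ofReal Cr * ENNReal.ofReal (δ ^ e) := by
          rw [hstep1]; exact mul_le_mul_right hstep2 _
      _ = ENNReal.ofReal (Cr * (ε / (Cr + 1))) := by
          rw [hδe, ← ENNReal.ofReal_mul hCr0]
      _ ≤ ENNReal.ofReal ε := by
          apply ENNReal.ofReal_le_ofReal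
          rw [mul_div_assoc', div_le_iff₀ (by positivity)]
          nlinarith
  -- the compact set `Q`
  set S : Set E₂ := B '' Metric.closedBall 0 M ∪ {0} with hSdef
  set D : Set E₂ := closure (convexHull ℝ S) with hDdef
  have hDcompact : IsCompact D := by
    apply TotallyBounded.isCompact_of_isClosed _ isClosed_closure
    apply TotallyBounded.closure
    apply totallyBounded_convexHull.mpr
    apply TotallyBounded.union
    · exact TotallyBounded.subset subset_closure
        (hB _ Metric.isBounded_closedBall).totallyBounded
    · exact totallyBounded_singleton 0
  have h0D : (0 : E₂) ∈ D := subset_closure (subset_convexHull ℝ S (Or.inr rfl))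
  have hDconvex : Convex ℝ D := (convex_convexHull ℝ S).closure
  set Q : Set E₂ := (fun q : ℝ × E₂ => q.1 • q.2) '' (Set.Icc 0 (t₂ - t₁) ×ˢ D) with hQdef
  have hQcompact : IsCompact Q :=
    (isCompact_Icc.prod hDcompact).image (continuous_fst.smul continuous_snd)
  refine ⟨Q, hQcompact, ?_⟩
  rintro x ⟨u, hu, rfl⟩
  -- shorthand for `v = B ∘ u`
  set f : ℝ → E₂ := B ∘ u with hfdef
  have hf_r : MemLp f r ν := (hVr u hu).mono_measure hν_le
  have hint : Integrable f ν := hf_r.integrable hr.le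
  have hu_meas : AEStronglyMeasurable u ν := (hU1 u hu).1.mono_measure hν_le
  -- the splitting set
  set s : Set ℝ := {t | ‖u t‖ ≤ M} with hsdef
  have hs : NullMeasurableSet s ν := by
    have h1 : AEMeasurable (fun t => ‖u t‖) ν := hu_meas.norm.aemeasurable
    have h2 : s = (fun t => ‖u t‖) ⁻¹' Set.Iic M := rfl
    rw [h2]
    exact h1.nullMeasurable (measurableSet_Iic (a := M))
  have hsplit : (∫ t in s, f t ∂ν) + (∫ t in sᶜ, f t ∂ν) = ∫ t, f t ∂ν :=
    integral_add_compl₀ hs hint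
  set y : E₂ := ∫ t in s, f t ∂ν with hydef
  set z : E₂ := ∫ t in sᶜ, f t ∂ν with hzdef
  have hxyz : (∫ t in Set.Ioc t₁ t₂, B (u t)) = y + z := by
    rw [hsplit]; rfl
  -- `y ∈ Q`
  have hyQ : y ∈ Q := by
    rcases eq_or_ne (ν s) 0 with h0 | h0
    · have : ν.restrict s = 0 := Measure.restrict_eq_zero.mpr h0
      have hy0 : y = 0 := by rw [hydef, this, integral_zero_measure]
      refine ⟨((0 : ℝ), (0 : E₂)), Set.mk_mem_prod ?_ h0D, by simp [hy0]⟩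
      exact Set.mem_Icc.mpr ⟨le_refl 0, by linarith⟩
    · have hsfin : ν s ≠ ∞ := (lt_of_le_of_lt (measure_mono (Set.subset_univ s))
        (measure_lt_top ν Set.univ)).ne
      have havg : (ν s).toReal • (⨍ t in s, f t ∂ν) = y :=
        measure_smul_setAverage f hsfin
      have havgD : (⨍ t in s, f t ∂ν) ∈ D := by
        apply hDconvex.set_average_mem isClosed_closure h0 hsfin
        · filter_upwards [ae_restrict_mem₀ hs] with t ht
          have : u t ∈ Metric.closedBall 0 M := by
            rw [Metric.mem_closedBall, dist_zero_right]; exact ht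
          exact subset_closure (subset_convexHull ℝ S (Or.inl ⟨u t, this, rfl⟩))
        · exact hint.integrableOn
      refine ⟨((ν s).toReal, ⨍ t in s, f t ∂ν), Set.mk_mem_prod ?_ havgD, havg⟩
      constructor
      · exact ENNReal.toReal_nonneg
      · apply ENNReal.toReal_le_of_le_ofReal (by linarith)
        calc ν s ≤ ν Set.univ := measure_mono (Set.subset_univ s)
          _ = ENNReal.ofReal (t₂ - t₁) := by
              rw [hνdef, Measure.restrict_apply_univ, Real.volume_Ioc]
  -- `‖z‖ ≤ ε`
  have hz_le : ‖z‖ ≤ ε := by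
    set m : Measure ℝ := ν.restrict sᶜ with hmdef
    have hm_le : m ≤ ν := Measure.restrict_le_self
    have hz1 : ‖z‖ ≤ (eLpNorm f 1 m).toReal := by
      rw [eLpNorm_one_eq_lintegral_enorm]
      have := norm_integral_le_lintegral_norm (μ := m) f
      simpa [ofReal_norm] using this
    -- Hölder
    have hhold : eLpNorm f 1 m ≤ eLpNorm f r m * m Set.univ ^ e := by
      have h := eLpNorm_le_eLpNorm_mul_rpow_measure_univ (μ := m) hr.le
        (hf_r.1.mono_measure hm_le)
      simpa [hedef] using h
    have hfr_le : eLpNorm f r m ≤ ENNReal.ofReal Cr :=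
      le_trans (eLpNorm_mono_measure f (le_trans hm_le hν_le)) (hCr u hu)
    -- Chebyshev
    have hmuniv : m Set.univ ≤ ENNReal.ofReal Cu / ENNReal.ofReal M := by
      have hm1 : m Set.univ = ν sᶜ := by
        rw [hmdef, Measure.restrict_apply_univ]
      have hsub' : sᶜ ⊆ {t : ℝ | ENNReal.ofReal M ≤ (‖u t‖₊ : ℝ≥0∞)} := by
        intro t ht
        have : M < ‖u t‖ := not_le.mp ht
        calc ENNReal.ofReal M ≤ ENNReal.ofReal ‖u t‖ :=
              ENNReal.ofReal_le_ofReal this.le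
          _ = (‖u t‖₊ : ℝ≥0∞) := ofReal_norm (u t)
      have hcheb : ENNReal.ofReal M * ν₀ {t : ℝ | ENNReal.ofReal M ≤ (‖u t‖₊ : ℝ≥0∞)}
          ≤ ENNReal.ofReal Cu := by
        have h1 := mul_meas_ge_le_lintegral₀ ((hU1 u hu).aestronglyMeasurable.enorm) (ENNReal.ofReal M)
        refine le_trans h1 ?_
        rw [← eLpNorm_one_eq_lintegral_enorm]
        exact hCu u hu
      rw [ENNReal.le_div_iff_mul_le (Or.inl (by
            simp only [ne_eq, ENNReal.ofReal_eq_zero, not_le]; linarith))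
          (Or.inl ENNReal.ofReal_ne_top)]
      rw [mul_comm]
      refine le_trans (mul_le_mul_right ?_ _) hcheb
      rw [hm1]
      exact le_trans (hν_le sᶜ) (measure_mono hsub')
    have hbound : eLpNorm f 1 m ≤ ENNReal.ofReal ε := by
      calc eLpNorm f 1 m ≤ eLpNorm f r m * m Set.univ ^ e := hhold
        _ ≤ ENNReal.ofReal Cr * (ENNReal.ofReal Cu / ENNReal.ofReal M) ^ e :=
            mul_le_mul' hfr_le (ENNReal.rpow_le_rpow hmuniv he.le)
        _ ≤ ENNReal.ofReal ε := hkey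
    calc ‖z‖ ≤ (eLpNorm f 1 m).toReal := hz1
      _ ≤ ε := ENNReal.toReal_le_of_le_ofReal hε.le hbound
  -- conclude
  refine ⟨y, hyQ, ?_⟩
  rw [hxyz, dist_eq_norm]
  simpa using hz_le
end

section
/- Lemma 1 (uniform approximation of K by Riemann sums of truncated functions): Let U be a bounded subset of L^1(0,T;E_1) such that V = {B∘u : u ∈ U} is a subset of L^p(0,T;E_2) bounded in L^r(0,T;E_2) for some r > 1, and assume ‖v(·+h) − v‖_{L^p(0,T−h;E_2)} → 0 as h → 0⁺ uniformly for v ∈ V. Fix 0 < t_1 < t_2 < T. Then for every ε > 0 there exist a positive integer N and a real M > 0 such that for every v = B∘u ∈ V there exists s ∈ (0,h), where h = (t_2−t_1)/N and ξ_i = t_1 + i·h, satisfying ‖ ∫_{t_1}^{t_2} v(t) dt − Σ_{i=1}^{N} h · v^M(ξ_{i−1} + s) ‖_{E_2} < ε, where v^M(t) = B(u^M(t)) and u^M is the truncation of u defined below. -/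
open MeasureTheory
open scoped ENNReal

private lemma lint_shift_Ioc (f : ℝ → ℝ≥0∞) (c a b : ℝ) :
    ∫⁻ t in Set.Ioc a b, f (t + c) = ∫⁻ t in Set.Ioc (a + c) (b + c), f t := by
  rw [(measurePreserving_add_right volume c).setLIntegral_comp_emb
    (measurableEmbedding_addRight c) f (Set.Ioc a b)]
  congr 1
  simp [Set.image_add_right]

private lemma lint_shift_Ioo (f : ℝ → ℝ≥0∞) (c a b : ℝ) :
    ∫⁻ t in Set.Ioo a b, f (t + c) = ∫⁻ t in Set.Ioo (a + c) (b + c), f t := by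
  rw [(measurePreserving_add_right volume c).setLIntegral_comp_emb
    (measurableEmbedding_addRight c) f (Set.Ioo a b)]
  congr 1
  simp [Set.image_add_right]

/-- The truncation `u^M` of `u` at height `M` on `[0,T]` : `u^M(t) = u(t)` if
`t ∉ G_u^M = {t ∈ [0,T] : ‖u(t)‖ > M}`, and `u^M(t) = 0` otherwise. -/
noncomputable def truncAtHeight {E₁ : Type*} [NormedAddCommGroup E₁]
    (T M : ℝ) (u : ℝ → E₁) (t : ℝ) : E₁ :=
  open scoped Classical in
  if t ∈ Set.Icc 0 T ∧ M < ‖u t‖ then 0 else u t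

set_option maxHeartbeats 2000000 in
/-- **Lemma 1 of Maitre** (uniform approximation of `K` by Riemann sums of the
truncated functions `v^M = B ∘ u^M`):  for every `ε > 0` there are an integer
`N` and a height `M > 0` such that for every `v = B ∘ u ∈ V` there is an
`s ∈ (0,h)`, `h = (t₂ - t₁)/N`, with
`‖∫_{t₁}^{t₂} v(t) dt − ∑_{i=1}^{N} h v^M(ξ_{i-1} + s)‖ < ε`, `ξ_i = t₁ + i h`. -/
theorem maitre_lemma1
    {E₁ E₂ : Type*} [NormedAddCommGroup E₁] [NormedSpace ℝ E₁] [CompleteSpace E₁]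
    [NormedAddCommGroup E₂] [NormedSpace ℝ E₂] [CompleteSpace E₂]
    (T : ℝ) (hT : 0 < T) (p : ℝ≥0∞) (hp : 1 ≤ p)
    (B : E₁ → E₂)
    (hB : ∀ s : Set E₁, Bornology.IsBounded s → IsCompact (closure (B '' s)))
    (U : Set (ℝ → E₁))
    -- `U` is a bounded subset of `L¹(0,T;E₁)`
    (hU1 : ∀ u ∈ U, MemLp u 1 (volume.restrict (Set.Ioc 0 T)))
    (hUbdd : ∃ C : ℝ, ∀ u ∈ U, eLpNorm u 1 (volume.restrict (Set.Ioc 0 T)) ≤ ENNReal.ofReal C)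
    -- `V = B(U)` is a subset of `L^p(0,T;E₂)`
    (hVp : ∀ u ∈ U, MemLp (B ∘ u) p (volume.restrict (Set.Ioc 0 T)))
    -- `V` is bounded in `L^r(0,T;E₂)` for some `r > 1`
    (r : ℝ≥0∞) (hr : 1 < r)
    (hVr : ∀ u ∈ U, MemLp (B ∘ u) r (volume.restrict (Set.Ioc 0 T)))
    (hVrbdd : ∃ C : ℝ, ∀ u ∈ U,
      eLpNorm (B ∘ u) r (volume.restrict (Set.Ioc 0 T)) ≤ ENNReal.ofReal C)
    -- uniform convergence of time translates in `L^p(0,T-h;E₂)`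
    (htrans : ∀ ε > 0, ∃ δ > 0, ∀ h : ℝ, 0 < h → h < δ → ∀ u ∈ U,
      eLpNorm (fun t => B (u (t + h)) - B (u t)) p (volume.restrict (Set.Ioc 0 (T - h)))
        ≤ ENNReal.ofReal ε)
    (t₁ t₂ : ℝ) (ht₁ : 0 < t₁) (ht₁₂ : t₁ < t₂) (ht₂ : t₂ < T) :
    ∀ ε > 0, ∃ N : ℕ, ∃ M : ℝ, 0 < N ∧ 0 < M ∧ ∀ u ∈ U,
      ∃ s : ℝ, 0 < s ∧ s < (t₂ - t₁) / N ∧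
        ‖(∫ t in Set.Ioc t₁ t₂, B (u t)) -
            ∑ i ∈ Finset.range N, ((t₂ - t₁) / N) •
              B (truncAtHeight T M u (t₁ + i * ((t₂ - t₁) / N) + s))‖ < ε := by
  intro ε hε
  obtain ⟨C₁, hC₁⟩ := hUbdd
  obtain ⟨Cr, hCr⟩ := hVrbdd
  set C₁' := max C₁ 0 with hC₁'def
  set Cr' := max Cr 0 with hCr'def
  have hC₁'0 : (0:ℝ) ≤ C₁' := le_max_right _ _
  -- the exponent θ = 1 - 1/r
  set θ : ℝ := 1 - 1 / r.toReal with hθdef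
  have hθ0 : 0 < θ := by
    rcases eq_or_ne r ∞ with hri | hri
    · simp [hθdef, hri]
    · have h1 : 1 < r.toReal := by
        rw [← ENNReal.toReal_one]
        exact (ENNReal.toReal_lt_toReal (by simp) hri).mpr hr
      have : 1 / r.toReal < 1 := by
        rw [div_lt_one (by linarith)]; linarith
      simp only [hθdef]; linarith
  -- the error functional φ and choice of the truncation height M
  set φ : ℝ≥0∞ → ℝ≥0∞ :=
    fun x => ENNReal.ofReal Cr' * x ^ θ + (‖B 0‖₊ : ℝ≥0∞) * x with hφdef
  have hM_exists : ∃ M : ℝ, 0 < M ∧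
      ∀ x : ℝ≥0∞, x ≤ ENNReal.ofReal (C₁' / M) → φ x ≤ ENNReal.ofReal (ε / 8) := by
    have hφcont : Continuous φ := by
      apply Continuous.add
      · exact (ENNReal.continuous_const_mul ENNReal.ofReal_ne_top).comp
          ENNReal.continuous_rpow_const
      · exact ENNReal.continuous_const_mul ENNReal.coe_ne_top
    have hφ0 : φ 0 = 0 := by
      simp [hφdef, ENNReal.zero_rpow_of_pos hθ0]
    have hev : ∀ᶠ x in nhds (0:ℝ≥0∞), φ x < ENNReal.ofReal (ε / 8) := by
      have h8 : (0:ℝ≥0∞) < ENNReal.ofReal (ε / 8) := ENNReal.ofReal_pos.mpr (by linarith)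
      have hc := hφcont.continuousAt (x := 0)
      rw [ContinuousAt, hφ0] at hc
      exact hc.eventually_lt_const h8
    obtain ⟨b, hb0, hb⟩ := ENNReal.nhds_zero_basis.eventually_iff.mp hev
    set c : ℝ≥0∞ := min b 1 with hcdef
    have hc0 : c ≠ 0 := (lt_min hb0 one_pos).ne'
    have hctop : c ≠ ∞ := ne_top_of_le_ne_top ENNReal.one_ne_top (min_le_right _ _)
    have hcr : 0 < c.toReal := ENNReal.toReal_pos hc0 hctop
    set a : ℝ := c.toReal / 2 with hadef
    have ha0 : 0 < a := by positivity
    have hab : ENNReal.ofReal a < b := by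
      have h1 : ENNReal.ofReal a < c := by
        rw [ENNReal.ofReal_lt_iff_lt_toReal ha0.le hctop]
        rw [hadef]; linarith
      exact h1.trans_le (min_le_left _ _)
    have hM0' : (0:ℝ) < max 1 (C₁' / a) := lt_of_lt_of_le one_pos (le_max_left _ _)
    refine ⟨max 1 (C₁' / a), hM0', ?_⟩
    intro x hx
    have hCa : C₁' / max 1 (C₁' / a) ≤ a := by
      rw [div_le_iff₀ hM0']
      have h2 : a * (C₁' / a) = C₁' := by field_simp
      nlinarith [le_max_right (1:ℝ) (C₁' / a)]
    have hxb : x < b := lt_of_le_of_lt (hx.trans (ENNReal.ofReal_le_ofReal hCa)) hab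
    exact (hb hxb).le
  obtain ⟨M, hM0, hMbound⟩ := hM_exists
  -- the exponent κ = 1 - 1/p
  set κ : ℝ := 1 - 1 / p.toReal with hκdef
  have hκ0 : 0 ≤ κ := by
    rcases eq_or_ne p ∞ with hpi | hpi
    · simp [hκdef, hpi]
    · have h1 : 1 ≤ p.toReal := by
        rw [← ENNReal.toReal_one]
        exact ENNReal.toReal_mono hpi hp
      have : 1 / p.toReal ≤ 1 := by
        rw [div_le_one (by linarith)]; linarith
      simp only [hκdef]; linarith
  have hκ1 : κ ≤ 1 := by
    have : 0 ≤ 1 / p.toReal := by positivity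
    simp only [hκdef]; linarith
  have hrpow : ∀ x : ℝ≥0∞, x ≤ ENNReal.ofReal T → x ^ κ ≤ ENNReal.ofReal (max 1 T) := by
    intro x hx
    rcases le_total x 1 with h1 | h1
    · calc x ^ κ ≤ 1 := ENNReal.rpow_le_one h1 hκ0
        _ ≤ ENNReal.ofReal (max 1 T) := by
            rw [ENNReal.one_le_ofReal]; exact le_max_left _ _
    · calc x ^ κ ≤ x ^ (1:ℝ) := ENNReal.rpow_le_rpow_of_exponent_le h1 hκ1
        _ = x := ENNReal.rpow_one x
        _ ≤ ENNReal.ofReal (max 1 T) :=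
            hx.trans (ENNReal.ofReal_le_ofReal (le_max_right _ _))
  -- choice of εp and δ
  set εp : ℝ := ε / (8 * max 1 T) with hεpdef
  have hmax10 : (0:ℝ) < max 1 T := lt_of_lt_of_le one_pos (le_max_left _ _)
  have hεp0 : 0 < εp := by positivity
  have hεpT : ENNReal.ofReal εp * ENNReal.ofReal (max 1 T) ≤ ENNReal.ofReal (ε / 8) := by
    rw [← ENNReal.ofReal_mul hεp0.le]
    apply ENNReal.ofReal_le_ofReal
    apply le_of_eq
    rw [hεpdef]
    field_simp
  obtain ⟨δ, hδ0, hδ⟩ := htrans εp hεp0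
  -- choice of N
  have hm0 : 0 < min δ (min t₁ (T - t₂)) := by
    simp only [lt_min_iff]; exact ⟨hδ0, ht₁, by linarith⟩
  obtain ⟨N, hN⟩ := exists_nat_gt ((t₂ - t₁) / min δ (min t₁ (T - t₂)))
  have hN0 : 0 < N := by
    have h1 : (0:ℝ) < (t₂ - t₁) / min δ (min t₁ (T - t₂)) := by
      apply div_pos (by linarith) hm0
    exact_mod_cast Nat.cast_pos.mp (h1.trans hN)
  have hNR : (0:ℝ) < N := Nat.cast_pos.mpr hN0
  set h : ℝ := (t₂ - t₁) / N with hhdef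
  have hh0 : 0 < h := div_pos (by linarith) hNR
  have hhm : h < min δ (min t₁ (T - t₂)) := by
    rw [hhdef, div_lt_iff₀ hNR, mul_comm, ← div_lt_iff₀ hm0]
    exact hN
  have hhδ : h < δ := lt_of_lt_of_le hhm (min_le_left _ _)
  have hht₁ : h < t₁ := lt_of_lt_of_le hhm ((min_le_right _ _).trans (min_le_left _ _))
  have hhT : h < T - t₂ := lt_of_lt_of_le hhm ((min_le_right _ _).trans (min_le_right _ _))
  have hNh : (N:ℝ) * h = t₂ - t₁ := by
    rw [hhdef, mul_div_cancel₀ _ hNR.ne']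
  refine ⟨N, M, hN0, hM0, ?_⟩
  intro u hu
  -- strongly measurable representatives of u and B ∘ u
  obtain ⟨w, hwm, hwae⟩ : ∃ w : ℝ → E₁, StronglyMeasurable w ∧
      u =ᵐ[volume.restrict (Set.Ioc 0 T)] w :=
    ⟨_, (hU1 u hu).aestronglyMeasurable.stronglyMeasurable_mk,
      (hU1 u hu).aestronglyMeasurable.ae_eq_mk⟩
  obtain ⟨g, hgm, hgae⟩ : ∃ w : ℝ → E₂, StronglyMeasurable w ∧
      (B ∘ u) =ᵐ[volume.restrict (Set.Ioc 0 T)] w :=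
    ⟨_, (hVp u hu).aestronglyMeasurable.stronglyMeasurable_mk,
      (hVp u hu).aestronglyMeasurable.ae_eq_mk⟩
  have haeu : ∀ᵐ t : ℝ, t ∈ Set.Ioc 0 T → u t = w t :=
    (ae_restrict_iff' measurableSet_Ioc).mp hwae
  have haeg : ∀ᵐ t : ℝ, t ∈ Set.Ioc 0 T → B (u t) = g t :=
    (ae_restrict_iff' measurableSet_Ioc).mp
      (hgae.mono fun t ht => by simpa [Function.comp] using ht)
  have hgint : IntegrableOn g (Set.Ioc 0 T) volume :=
    (((hVp u hu).mono_exponent hp).integrable le_rfl).congr hgae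
  set gM : ℝ → E₂ := fun t => if M < ‖w t‖ then B 0 else g t with hgMdef
  have hDmeas : MeasurableSet {t : ℝ | M < ‖w t‖} :=
    measurableSet_lt measurable_const hwm.norm.measurable
  have hgMm : StronglyMeasurable gM :=
    StronglyMeasurable.ite hDmeas stronglyMeasurable_const hgm
  set ξ : ℕ → ℝ := fun i => t₁ + i * h with hξdef
  have hξsucc : ∀ i : ℕ, ξ (i + 1) = ξ i + h := by
    intro i; simp only [hξdef]; push_cast; ring
  have hξN : ξ N = t₂ := by simp only [hξdef]; rw [hNh]; ring
  have hξmono : ∀ i : ℕ, t₁ ≤ ξ i := by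
    intro i
    simp only [hξdef]
    nlinarith [Nat.cast_nonneg (α := ℝ) i, hh0]
  have hξlt : ∀ i : ℕ, i < N → ξ i + h ≤ t₂ := by
    intro i hi
    have h1 : (i:ℝ) + 1 ≤ N := by exact_mod_cast Nat.succ_le_of_lt hi
    simp only [hξdef]
    nlinarith
  have hξmem : ∀ i : ℕ, i < N → ∀ s : ℝ, 0 < s → s < h → ξ i + s ∈ Set.Ioc 0 T := by
    intro i hi s hs0 hsh
    have h1 := hξmono i
    have h2 := hξlt i hi
    exact ⟨by linarith, by linarith⟩
  -- the translation estimate for the measurable representative g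
  have trans_est : ∀ a b τ : ℝ, 0 ≤ a → b ≤ T - τ → 0 < τ → τ < δ →
      ∫⁻ t in Set.Ioc a b, (‖g (t + τ) - g t‖₊ : ℝ≥0∞) ≤ ENNReal.ofReal (ε / 8) := by
    intro a b τ ha hb hτ0 hτδ
    by_cases hab : a ≤ b
    swap
    · push_neg at hab
      rw [Set.Ioc_eq_empty (by push_neg; linarith)]
      simp
    have hcong : (fun t => g (t + τ) - g t)
        =ᵐ[volume.restrict (Set.Ioc a b)] (fun t => B (u (t + τ)) - B (u t)) := by
      have haegτ : ∀ᵐ t : ℝ, (t + τ) ∈ Set.Ioc 0 T → B (u (t + τ)) = g (t + τ) :=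
        (measurePreserving_add_right volume τ).quasiMeasurePreserving.ae haeg
      filter_upwards [ae_restrict_of_ae haeg, ae_restrict_of_ae haegτ,
        ae_restrict_mem measurableSet_Ioc] with t h1 h2 ht
      have ht1 : t ∈ Set.Ioc 0 T := ⟨lt_of_le_of_lt ha ht.1, by linarith [ht.2]⟩
      have ht2 : t + τ ∈ Set.Ioc 0 T :=
        ⟨by linarith [lt_of_le_of_lt ha ht.1], by linarith [ht.2]⟩
      rw [h1 ht1, h2 ht2]
    have hsm : StronglyMeasurable (fun t => g (t + τ) - g t) :=
      (hgm.comp_measurable (measurable_add_const τ)).sub hgm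
    calc ∫⁻ t in Set.Ioc a b, (‖g (t + τ) - g t‖₊ : ℝ≥0∞)
        = eLpNorm (fun t => g (t + τ) - g t) 1 (volume.restrict (Set.Ioc a b)) :=
          by rw [eLpNorm_one_eq_lintegral_enorm]; rfl
      _ ≤ eLpNorm (fun t => g (t + τ) - g t) p (volume.restrict (Set.Ioc a b)) *
            (volume.restrict (Set.Ioc a b)) Set.univ ^ (1 / (1:ℝ≥0∞).toReal - 1 / p.toReal) :=
          eLpNorm_le_eLpNorm_mul_rpow_measure_univ hp hsm.aestronglyMeasurable
      _ ≤ ENNReal.ofReal εp * ENNReal.ofReal (max 1 T) := by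
          apply mul_le_mul'
          · rw [eLpNorm_congr_ae hcong]
            calc eLpNorm (fun t => B (u (t + τ)) - B (u t)) p (volume.restrict (Set.Ioc a b))
                ≤ eLpNorm (fun t => B (u (t + τ)) - B (u t)) p
                    (volume.restrict (Set.Ioc 0 (T - τ))) :=
                  eLpNorm_mono_measure _
                    (Measure.restrict_mono (Set.Ioc_subset_Ioc ha hb) le_rfl)
              _ ≤ ENNReal.ofReal εp := hδ τ hτ0 hτδ u hu
          · have hle : (volume.restrict (Set.Ioc a b)) Set.univ ≤ ENNReal.ofReal T := by
              rw [Measure.restrict_apply_univ, Real.volume_Ioc]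
              apply ENNReal.ofReal_le_ofReal
              linarith
            have hexp : 1 / (1:ℝ≥0∞).toReal - 1 / p.toReal = κ := by
              rw [hκdef]; norm_num
            rw [hexp]
            exact hrpow _ hle
      _ ≤ ENNReal.ofReal (ε / 8) := hεpT
  have Ψbound : ∀ τ ∈ Set.Ioo (-h) h,
      ∫⁻ t in Set.Ioc t₁ t₂, (‖g (t + τ) - g t‖₊ : ℝ≥0∞) ≤ ENNReal.ofReal (ε / 8) := by
    rintro τ ⟨hτl, hτr⟩
    rcases lt_trichotomy τ 0 with hτ | hτ | hτ
    · have hstep : ∫⁻ t in Set.Ioc t₁ t₂, (‖g (t + τ) - g t‖₊ : ℝ≥0∞)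
          = ∫⁻ x in Set.Ioc (t₁ + τ) (t₂ + τ), (‖g (x + -τ) - g x‖₊ : ℝ≥0∞) := by
        rw [← lint_shift_Ioc (fun x => (‖g (x + -τ) - g x‖₊ : ℝ≥0∞)) τ t₁ t₂]
        apply lintegral_congr
        intro t
        simp only [add_neg_cancel_right]
        congr 1
        rw [← neg_sub, nnnorm_neg]
      rw [hstep]
      exact trans_est (t₁ + τ) (t₂ + τ) (-τ) (by linarith) (by linarith) (by linarith)
        (by linarith)
    · simp [hτ]
    · exact trans_est t₁ t₂ τ ht₁.le (by linarith) hτ (by linarith)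
  have hstep2 : ∀ i j : ℕ, i < j → ξ i + h ≤ ξ j := by
    intro i j hij
    have h1 : (i:ℝ) + 1 ≤ j := by exact_mod_cast hij
    simp only [hξdef]
    nlinarith
  have sum_shift : ∀ F : ℝ → ℝ≥0∞,
      (∑ i ∈ Finset.range N, ∫⁻ s in Set.Ioo 0 h, F (ξ i + s)) ≤
        ∫⁻ t in Set.Ioc t₁ t₂, F t := by
    intro F
    have h1 : ∀ i : ℕ, ∫⁻ s in Set.Ioo 0 h, F (ξ i + s)
        = ∫⁻ t in Set.Ioo (ξ i) (ξ i + h), F t := by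
      intro i
      have h2 := lint_shift_Ioo F (ξ i) 0 h
      rw [zero_add] at h2
      rw [show ξ i + h = h + ξ i from add_comm _ _, ← h2]
      exact lintegral_congr fun s => by rw [add_comm]
    calc ∑ i ∈ Finset.range N, ∫⁻ s in Set.Ioo 0 h, F (ξ i + s)
        = ∑ i ∈ Finset.range N, ∫⁻ t in Set.Ioo (ξ i) (ξ i + h), F t :=
          Finset.sum_congr rfl fun i _ => h1 i
      _ = ∫⁻ t in ⋃ i ∈ Finset.range N, Set.Ioo (ξ i) (ξ i + h), F t := by
          rw [lintegral_biUnion_finset ?_ (fun i _ => measurableSet_Ioo) F]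
          intro i _ j _ hij
          apply Set.disjoint_left.mpr
          intro x hx1 hx2
          rcases lt_or_gt_of_ne hij with hlt | hlt
          · have := hstep2 i j hlt
            have := hx1.2
            have := hx2.1
            simp only [Set.mem_Ioo] at *
            linarith
          · have := hstep2 j i hlt
            simp only [Set.mem_Ioo] at *
            linarith
      _ ≤ ∫⁻ t in Set.Ioc t₁ t₂, F t := by
          apply lintegral_mono_set
          apply Set.iUnion₂_subset
          intro i hi
          rw [Finset.mem_range] at hi
          intro x hx
          exact ⟨lt_of_le_of_lt (hξmono i) hx.1, le_trans hx.2.le (hξlt i hi)⟩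
  have trunc_est : ∫⁻ t in Set.Ioc t₁ t₂, (‖g t - gM t‖₊ : ℝ≥0∞) ≤
      ENNReal.ofReal (ε / 8) := by
    set D : Set ℝ := {t : ℝ | M < ‖w t‖} ∩ Set.Ioc t₁ t₂ with hDdef
    have hDm : MeasurableSet D := hDmeas.inter measurableSet_Ioc
    have hDsub : D ⊆ Set.Ioc 0 T := fun t ht =>
      ⟨lt_trans ht₁ ht.2.1, le_trans ht.2.2 ht₂.le⟩
    -- the measure of the bad set is small
    have hsetm : MeasurableSet {t : ℝ | ENNReal.ofReal M ≤ (‖w t‖₊ : ℝ≥0∞)} :=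
      measurableSet_le measurable_const hwm.enorm
    have hvolD : volume D ≤ ENNReal.ofReal (C₁' / M) := by
      have hsub : D ⊆ {t : ℝ | ENNReal.ofReal M ≤ (‖w t‖₊ : ℝ≥0∞)} ∩ Set.Ioc 0 T := by
        rintro t ⟨h1, h2⟩
        refine ⟨?_, hDsub ⟨h1, h2⟩⟩
        rw [Set.mem_setOf_eq, ← enorm_eq_nnnorm, ← ofReal_norm]
        exact ENNReal.ofReal_le_ofReal (Set.mem_setOf_eq ▸ h1).le
      calc volume D
          ≤ volume ({t : ℝ | ENNReal.ofReal M ≤ (‖w t‖₊ : ℝ≥0∞)} ∩ Set.Ioc 0 T) :=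
            measure_mono hsub
        _ = (volume.restrict (Set.Ioc 0 T))
              {t : ℝ | ENNReal.ofReal M ≤ (‖w t‖₊ : ℝ≥0∞)} := by
            rw [Measure.restrict_apply hsetm]
        _ ≤ (∫⁻ t in Set.Ioc 0 T, (‖w t‖₊ : ℝ≥0∞)) / ENNReal.ofReal M :=
            meas_ge_le_lintegral_div hwm.enorm.aemeasurable
              (ENNReal.ofReal_pos.mpr hM0).ne' ENNReal.ofReal_ne_top
        _ ≤ ENNReal.ofReal C₁' / ENNReal.ofReal M := by
            gcongr
            have h3 : ∫⁻ t in Set.Ioc 0 T, (‖w t‖₊:ℝ≥0∞)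
                = eLpNorm w 1 (volume.restrict (Set.Ioc 0 T)) :=
              by rw [eLpNorm_one_eq_lintegral_enorm]; rfl
            rw [h3, ← eLpNorm_congr_ae hwae]
            exact (hC₁ u hu).trans (ENNReal.ofReal_le_ofReal (le_max_left _ _))
        _ = ENNReal.ofReal (C₁' / M) := (ENNReal.ofReal_div_of_pos hM0).symm
    -- the L^r bound on the bad set
    have hgr1 : ∫⁻ t in D, (‖g t‖₊ : ℝ≥0∞) ≤ ENNReal.ofReal Cr' * (volume D) ^ θ := by
      have hH := eLpNorm_le_eLpNorm_mul_rpow_measure_univ (p := 1) (q := r)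
        hr.le hgm.aestronglyMeasurable (μ := volume.restrict D)
      have hgr : eLpNorm g r (volume.restrict D) ≤ ENNReal.ofReal Cr' := by
        calc eLpNorm g r (volume.restrict D)
            ≤ eLpNorm g r (volume.restrict (Set.Ioc 0 T)) :=
              eLpNorm_mono_measure _ (Measure.restrict_mono hDsub le_rfl)
          _ = eLpNorm (B ∘ u) r (volume.restrict (Set.Ioc 0 T)) :=
              (eLpNorm_congr_ae hgae).symm
          _ ≤ ENNReal.ofReal Cr' :=
              (hCr u hu).trans (ENNReal.ofReal_le_ofReal (le_max_left _ _))
      have hexp : 1 / (1:ℝ≥0∞).toReal - 1 / r.toReal = θ := by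
        rw [hθdef]; norm_num
      calc ∫⁻ t in D, (‖g t‖₊ : ℝ≥0∞)
          = eLpNorm g 1 (volume.restrict D) := by rw [eLpNorm_one_eq_lintegral_enorm]; rfl
        _ ≤ eLpNorm g r (volume.restrict D) *
              (volume.restrict D) Set.univ ^ (1 / (1:ℝ≥0∞).toReal - 1 / r.toReal) := hH
        _ ≤ ENNReal.ofReal Cr' * (volume D) ^ θ := by
            rw [hexp, Measure.restrict_apply_univ]
            exact mul_le_mul' hgr le_rfl
    -- assembling
    calc ∫⁻ t in Set.Ioc t₁ t₂, (‖g t - gM t‖₊ : ℝ≥0∞)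
        ≤ ∫⁻ t in Set.Ioc t₁ t₂,
            Set.indicator {t : ℝ | M < ‖w t‖}
              (fun t => (‖g t‖₊ : ℝ≥0∞) + (‖B 0‖₊ : ℝ≥0∞)) t := by
          apply lintegral_mono_ae
          filter_upwards [ae_restrict_mem measurableSet_Ioc] with t ht
          rw [hgMdef]
          by_cases hc : M < ‖w t‖
          · rw [Set.indicator_of_mem (show t ∈ {t : ℝ | M < ‖w t‖} from hc)]
            simp only [if_pos hc]
            rw [← ENNReal.coe_add]
            exact_mod_cast nnnorm_sub_le _ _
          · simp only [if_neg hc]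
            rw [Set.indicator_of_notMem (show t ∉ {t : ℝ | M < ‖w t‖} from hc)]
            simp
      _ = ∫⁻ t in D, ((‖g t‖₊ : ℝ≥0∞) + (‖B 0‖₊ : ℝ≥0∞)) := by
          rw [lintegral_indicator hDmeas, Measure.restrict_restrict hDmeas]
      _ = (∫⁻ t in D, (‖g t‖₊ : ℝ≥0∞)) + (‖B 0‖₊ : ℝ≥0∞) * volume D := by
          rw [lintegral_add_right _ measurable_const, setLIntegral_const]
      _ ≤ ENNReal.ofReal Cr' * (volume D) ^ θ + (‖B 0‖₊ : ℝ≥0∞) * volume D :=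
          add_le_add_left hgr1 _
      _ = φ (volume D) := rfl
      _ ≤ ENNReal.ofReal (ε / 8) := hMbound _ hvolD
  have hint : ∀ k : ℕ, k < N → IntervalIntegrable g volume (ξ k) (ξ (k + 1)) := by
    intro k hk
    rw [hξsucc k, intervalIntegrable_iff_integrableOn_Ioc_of_le (by linarith [hh0])]
    apply hgint.mono_set
    intro x hx
    exact ⟨lt_of_lt_of_le (lt_of_lt_of_le ht₁ (hξmono k)) hx.1.le,
      le_trans hx.2 (le_trans (hξlt k hk) ht₂.le)⟩
  have hgint2 : ∀ i : ℕ, i < N →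
      IntegrableOn (fun σ => g (ξ i + σ)) (Set.Ioc 0 h) volume := by
    intro i hi
    have h1 : IntervalIntegrable g volume (ξ i) (ξ i + h) := by
      rw [← hξsucc i]; exact hint i hi
    have h2 := h1.comp_add_left (ξ i)
    rw [sub_self, add_sub_cancel_left] at h2
    rwa [intervalIntegrable_iff_integrableOn_Ioc_of_le hh0.le] at h2
  have hsplit : (∫ t in Set.Ioc t₁ t₂, B (u t)) =
      ∑ i ∈ Finset.range N, ∫ σ in Set.Ioc 0 h, g (ξ i + σ) := by
    have hξ0 : ξ 0 = t₁ := by simp [hξdef]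
    calc (∫ t in Set.Ioc t₁ t₂, B (u t)) = ∫ t in Set.Ioc t₁ t₂, g t := by
          apply setIntegral_congr_ae measurableSet_Ioc
          filter_upwards [haeg] with t h1 ht
          exact h1 ⟨lt_trans ht₁ ht.1, le_trans ht.2 ht₂.le⟩
      _ = ∫ t in t₁..t₂, g t := (intervalIntegral.integral_of_le ht₁₂.le).symm
      _ = ∫ t in (ξ 0)..(ξ N), g t := by rw [hξ0, hξN]
      _ = ∑ i ∈ Finset.range N, ∫ t in (ξ i)..(ξ (i + 1)), g t :=
          (intervalIntegral.sum_integral_adjacent_intervals hint).symm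
      _ = ∑ i ∈ Finset.range N, ∫ σ in Set.Ioc 0 h, g (ξ i + σ) := by
          apply Finset.sum_congr rfl
          intro i hi
          rw [← intervalIntegral.integral_of_le hh0.le,
            intervalIntegral.integral_comp_add_left g (ξ i), add_zero, ← hξsucc i]
  have key : ∫⁻ s in Set.Ioo 0 h, ENNReal.ofReal
      ‖(∫ t in Set.Ioc t₁ t₂, B (u t)) - ∑ i ∈ Finset.range N, h • gM (ξ i + s)‖
      ≤ ENNReal.ofReal (ε / 2) * ENNReal.ofReal h := by
    have hmeas_pair : ∀ i : ℕ, Measurable fun q : ℝ × ℝ =>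
        (‖g (ξ i + q.1 + q.2) - g (ξ i + q.1)‖₊ : ℝ≥0∞) := by
      intro i
      refine StronglyMeasurable.enorm
        (f := fun q : ℝ × ℝ => g (ξ i + q.1 + q.2) - g (ξ i + q.1)) ?_
      exact (hgm.comp_measurable ((measurable_fst.const_add (ξ i)).add measurable_snd)).sub
        (hgm.comp_measurable (measurable_fst.const_add (ξ i)))
    have hmeasA : ∀ i : ℕ, Measurable fun s : ℝ =>
        ∫⁻ τ in Set.Ioo (-h) h, (‖g (ξ i + s + τ) - g (ξ i + s)‖₊ : ℝ≥0∞) :=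
      fun i => (hmeas_pair i).lintegral_prod_right'
    have hmeasA' : ∀ i : ℕ, Measurable fun τ : ℝ =>
        ∫⁻ s in Set.Ioo 0 h, (‖g (ξ i + s + τ) - g (ξ i + s)‖₊ : ℝ≥0∞) :=
      fun i => (hmeas_pair i).lintegral_prod_left'
    have hmeasB : ∀ i : ℕ, Measurable fun s : ℝ =>
        ENNReal.ofReal h * (‖g (ξ i + s) - gM (ξ i + s)‖₊ : ℝ≥0∞) := by
      intro i
      apply Measurable.const_mul
      refine StronglyMeasurable.enorm
        (f := fun s : ℝ => g (ξ i + s) - gM (ξ i + s)) ?_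
      exact (hgm.comp_measurable (measurable_id.const_add (ξ i))).sub
        (hgMm.comp_measurable (measurable_id.const_add (ξ i)))
    have hK1 : ∀ s ∈ Set.Ioo 0 h, ENNReal.ofReal
        ‖(∫ t in Set.Ioc t₁ t₂, B (u t)) - ∑ i ∈ Finset.range N, h • gM (ξ i + s)‖
        ≤ ∑ i ∈ Finset.range N,
            ∫⁻ σ in Set.Ioc 0 h, (‖g (ξ i + σ) - gM (ξ i + s)‖₊ : ℝ≥0∞) := by
      intro s _
      rw [hsplit]
      have hconst : ∀ i : ℕ, h • gM (ξ i + s) = ∫ _ in Set.Ioc 0 h, gM (ξ i + s) := by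
        intro i
        rw [setIntegral_const, Measure.real, Real.volume_Ioc, sub_zero, ENNReal.toReal_ofReal hh0.le]
      have hEq : (∑ i ∈ Finset.range N, ∫ σ in Set.Ioc 0 h, g (ξ i + σ)) -
            ∑ i ∈ Finset.range N, h • gM (ξ i + s)
          = ∑ i ∈ Finset.range N,
              ∫ σ in Set.Ioc 0 h, (g (ξ i + σ) - gM (ξ i + s)) := by
        rw [← Finset.sum_sub_distrib]
        apply Finset.sum_congr rfl
        intro i hi
        rw [Finset.mem_range] at hi
        rw [hconst i, ← integral_sub (hgint2 i hi)
          ((integrableOn_const_iff).mpr (Or.inr (by rw [Real.volume_Ioc]; exact ENNReal.ofReal_lt_top)))]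
      rw [hEq]
      calc ENNReal.ofReal
            ‖∑ i ∈ Finset.range N, ∫ σ in Set.Ioc 0 h, (g (ξ i + σ) - gM (ξ i + s))‖
          ≤ ∑ i ∈ Finset.range N,
              ENNReal.ofReal ‖∫ σ in Set.Ioc 0 h, (g (ξ i + σ) - gM (ξ i + s))‖ := by
            calc ENNReal.ofReal
                  ‖∑ i ∈ Finset.range N, ∫ σ in Set.Ioc 0 h, (g (ξ i + σ) - gM (ξ i + s))‖
                ≤ ENNReal.ofReal (∑ i ∈ Finset.range N,
                    ‖∫ σ in Set.Ioc 0 h, (g (ξ i + σ) - gM (ξ i + s))‖) :=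
                  ENNReal.ofReal_le_ofReal (norm_sum_le _ _)
              _ = _ := ENNReal.ofReal_sum_of_nonneg (fun _ _ => norm_nonneg _)
          _ ≤ _ := by
            apply Finset.sum_le_sum
            intro i _
            rw [ofReal_norm]
            exact enorm_integral_le_lintegral_enorm _
    have hK2 : ∀ s ∈ Set.Ioo 0 h, ∀ i ∈ Finset.range N,
        ∫⁻ σ in Set.Ioc 0 h, (‖g (ξ i + σ) - gM (ξ i + s)‖₊ : ℝ≥0∞)
        ≤ (∫⁻ τ in Set.Ioo (-h) h, (‖g (ξ i + s + τ) - g (ξ i + s)‖₊ : ℝ≥0∞))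
          + ENNReal.ofReal h * (‖g (ξ i + s) - gM (ξ i + s)‖₊ : ℝ≥0∞) := by
      rintro s ⟨hs0, hsh⟩ i _
      have htri : ∀ σ : ℝ, (‖g (ξ i + σ) - gM (ξ i + s)‖₊ : ℝ≥0∞)
          ≤ (‖g (ξ i + σ) - g (ξ i + s)‖₊ : ℝ≥0∞)
            + (‖g (ξ i + s) - gM (ξ i + s)‖₊ : ℝ≥0∞) := by
        intro σ
        rw [← ENNReal.coe_add, ENNReal.coe_le_coe]
        calc ‖g (ξ i + σ) - gM (ξ i + s)‖₊
            = ‖(g (ξ i + σ) - g (ξ i + s)) + (g (ξ i + s) - gM (ξ i + s))‖₊ := by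
              rw [sub_add_sub_cancel]
          _ ≤ _ := nnnorm_add_le _ _
      have hshift : ∫⁻ σ in Set.Ioc 0 h, (‖g (ξ i + σ) - g (ξ i + s)‖₊ : ℝ≥0∞)
          ≤ ∫⁻ τ in Set.Ioo (-h) h, (‖g (ξ i + s + τ) - g (ξ i + s)‖₊ : ℝ≥0∞) := by
        have h2 := lint_shift_Ioc
          (fun τ => (‖g (ξ i + s + τ) - g (ξ i + s)‖₊ : ℝ≥0∞)) (-s) 0 h
        have h3 : ∀ σ : ℝ, ξ i + s + (σ + -s) = ξ i + σ := fun σ => by ring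
        simp only [h3] at h2
        rw [h2]
        apply lintegral_mono_set
        intro τ hτ
        simp only [Set.mem_Ioc, Set.mem_Ioo] at *
        constructor
        · linarith [hτ.1]
        · linarith [hτ.2]
      calc ∫⁻ σ in Set.Ioc 0 h, (‖g (ξ i + σ) - gM (ξ i + s)‖₊ : ℝ≥0∞)
          ≤ ∫⁻ σ in Set.Ioc 0 h, ((‖g (ξ i + σ) - g (ξ i + s)‖₊ : ℝ≥0∞)
              + (‖g (ξ i + s) - gM (ξ i + s)‖₊ : ℝ≥0∞)) := lintegral_mono htri
        _ = (∫⁻ σ in Set.Ioc 0 h, (‖g (ξ i + σ) - g (ξ i + s)‖₊ : ℝ≥0∞))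
              + ENNReal.ofReal h * (‖g (ξ i + s) - gM (ξ i + s)‖₊ : ℝ≥0∞) := by
            rw [lintegral_add_right _ measurable_const, setLIntegral_const,
              Real.volume_Ioc, sub_zero, mul_comm]
        _ ≤ _ := add_le_add_left hshift _
    calc ∫⁻ s in Set.Ioo 0 h, ENNReal.ofReal
          ‖(∫ t in Set.Ioc t₁ t₂, B (u t)) - ∑ i ∈ Finset.range N, h • gM (ξ i + s)‖
        ≤ ∫⁻ s in Set.Ioo 0 h, ∑ i ∈ Finset.range N,
            ((∫⁻ τ in Set.Ioo (-h) h, (‖g (ξ i + s + τ) - g (ξ i + s)‖₊ : ℝ≥0∞))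
              + ENNReal.ofReal h * (‖g (ξ i + s) - gM (ξ i + s)‖₊ : ℝ≥0∞)) := by
          apply lintegral_mono_ae
          filter_upwards [ae_restrict_mem measurableSet_Ioo] with s hs
          exact (hK1 s hs).trans (Finset.sum_le_sum fun i hi => hK2 s hs i hi)
      _ = (∑ i ∈ Finset.range N, ∫⁻ s in Set.Ioo 0 h,
            ∫⁻ τ in Set.Ioo (-h) h, (‖g (ξ i + s + τ) - g (ξ i + s)‖₊ : ℝ≥0∞))
          + ∑ i ∈ Finset.range N, ∫⁻ s in Set.Ioo 0 h,
            ENNReal.ofReal h * (‖g (ξ i + s) - gM (ξ i + s)‖₊ : ℝ≥0∞) := by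
          rw [lintegral_finset_sum' (f := fun i s =>
              (∫⁻ τ in Set.Ioo (-h) h, (‖g (ξ i + s + τ) - g (ξ i + s)‖₊ : ℝ≥0∞))
                + ENNReal.ofReal h * (‖g (ξ i + s) - gM (ξ i + s)‖₊ : ℝ≥0∞)) _
            (fun i _ => ((hmeasA i).add (hmeasB i)).aemeasurable)]
          rw [← Finset.sum_add_distrib]
          apply Finset.sum_congr rfl
          intro i _
          exact lintegral_add_right' _ (hmeasB i).aemeasurable
      _ ≤ ENNReal.ofReal (ε / 8) * ENNReal.ofReal (2 * h)
          + ENNReal.ofReal h * ENNReal.ofReal (ε / 8) := by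
          apply add_le_add
          · calc ∑ i ∈ Finset.range N, ∫⁻ s in Set.Ioo 0 h,
                  ∫⁻ τ in Set.Ioo (-h) h, (‖g (ξ i + s + τ) - g (ξ i + s)‖₊ : ℝ≥0∞)
                = ∑ i ∈ Finset.range N, ∫⁻ τ in Set.Ioo (-h) h,
                    ∫⁻ s in Set.Ioo 0 h, (‖g (ξ i + s + τ) - g (ξ i + s)‖₊ : ℝ≥0∞) :=
                  Finset.sum_congr rfl fun i _ =>
                    lintegral_lintegral_swap (hmeas_pair i).aemeasurable
              _ = ∫⁻ τ in Set.Ioo (-h) h, ∑ i ∈ Finset.range N,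
                    ∫⁻ s in Set.Ioo 0 h, (‖g (ξ i + s + τ) - g (ξ i + s)‖₊ : ℝ≥0∞) :=
                  (lintegral_finset_sum' _ (fun i _ => (hmeasA' i).aemeasurable)).symm
              _ ≤ ∫⁻ _ in Set.Ioo (-h) h, ENNReal.ofReal (ε / 8) := by
                  apply lintegral_mono_ae
                  filter_upwards [ae_restrict_mem measurableSet_Ioo] with τ hτ
                  exact (sum_shift (fun t => (‖g (t + τ) - g t‖₊ : ℝ≥0∞))).trans
                    (Ψbound τ hτ)
              _ = ENNReal.ofReal (ε / 8) * ENNReal.ofReal (2 * h) := by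
                  rw [setLIntegral_const, Real.volume_Ioo]
                  congr 2
                  ring
          · calc ∑ i ∈ Finset.range N, ∫⁻ s in Set.Ioo 0 h,
                  ENNReal.ofReal h * (‖g (ξ i + s) - gM (ξ i + s)‖₊ : ℝ≥0∞)
                = ENNReal.ofReal h * ∑ i ∈ Finset.range N,
                    ∫⁻ s in Set.Ioo 0 h, (‖g (ξ i + s) - gM (ξ i + s)‖₊ : ℝ≥0∞) := by
                  rw [Finset.mul_sum]
                  exact Finset.sum_congr rfl fun i _ =>
                    lintegral_const_mul' _ _ ENNReal.ofReal_ne_top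
              _ ≤ ENNReal.ofReal h * ENNReal.ofReal (ε / 8) :=
                  mul_le_mul' le_rfl
                    ((sum_shift (fun t => (‖g t - gM t‖₊ : ℝ≥0∞))).trans trunc_est)
      _ ≤ ENNReal.ofReal (ε / 2) * ENNReal.ofReal h := by
          rw [← ENNReal.ofReal_mul (by linarith), ← ENNReal.ofReal_mul hh0.le,
            ← ENNReal.ofReal_add (by nlinarith) (by nlinarith),
            ← ENNReal.ofReal_mul (by linarith)]
          apply ENNReal.ofReal_le_ofReal
          nlinarith
  have hgood : ∀ᵐ s : ℝ, ∀ i : ℕ, (ξ i + s ∈ Set.Ioc 0 T →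
      (u (ξ i + s) = w (ξ i + s) ∧ B (u (ξ i + s)) = g (ξ i + s))) := by
    rw [ae_all_iff]
    intro i
    have hae2 : ∀ᵐ t : ℝ, t ∈ Set.Ioc 0 T → (u t = w t ∧ B (u t) = g t) := by
      filter_upwards [haeu, haeg] with t h1 h2 ht
      exact ⟨h1 ht, h2 ht⟩
    exact (measurePreserving_add_left volume (ξ i)).quasiMeasurePreserving.ae hae2
  -- final extraction of a good shift s
  by_contra hcon
  push_neg at hcon
  have hae3 : ∀ᵐ s : ℝ, s ∈ Set.Ioo 0 h → ENNReal.ofReal ε ≤ ENNReal.ofReal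
      ‖(∫ t in Set.Ioc t₁ t₂, B (u t)) - ∑ i ∈ Finset.range N, h • gM (ξ i + s)‖ := by
    filter_upwards [hgood] with s hgs hs
    have heq : ∀ i ∈ Finset.range N,
        h • B (truncAtHeight T M u (ξ i + s)) = h • gM (ξ i + s) := by
      intro i hi
      rw [Finset.mem_range] at hi
      have hmem := hξmem i hi s hs.1 hs.2
      obtain ⟨h1, h2⟩ := hgs i hmem
      congr 1
      have hIcc : ξ i + s ∈ Set.Icc 0 T := ⟨hmem.1.le, hmem.2⟩
      rw [truncAtHeight, hgMdef]
      by_cases hcond : M < ‖u (ξ i + s)‖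
      · rw [if_pos ⟨hIcc, hcond⟩]
        simp only
        rw [if_pos (h1 ▸ hcond)]
      · rw [if_neg (by tauto)]
        simp only
        rw [if_neg (h1 ▸ hcond), h2]
    have hc := hcon s hs.1 hs.2
    apply ENNReal.ofReal_le_ofReal
    rwa [Finset.sum_congr rfl heq] at hc
  have hcontr : ENNReal.ofReal ε * ENNReal.ofReal h ≤
      ENNReal.ofReal (ε / 2) * ENNReal.ofReal h := by
    calc ENNReal.ofReal ε * ENNReal.ofReal h
        = ∫⁻ _ in Set.Ioo 0 h, ENNReal.ofReal ε := by
          rw [setLIntegral_const, Real.volume_Ioo, sub_zero]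
      _ ≤ ∫⁻ s in Set.Ioo 0 h, ENNReal.ofReal
            ‖(∫ t in Set.Ioc t₁ t₂, B (u t)) -
              ∑ i ∈ Finset.range N, h • gM (ξ i + s)‖ := by
          apply lintegral_mono_ae
          filter_upwards [ae_restrict_of_ae hae3, ae_restrict_mem measurableSet_Ioo]
            with s h1 h2
          exact h1 h2
      _ ≤ _ := key
  have hhne : ENNReal.ofReal h ≠ 0 := by
    simp [ENNReal.ofReal_eq_zero]; linarith
  have := (ENNReal.mul_le_mul_iff_left hhne ENNReal.ofReal_ne_top).mp hcontr
  rw [ENNReal.ofReal_le_ofReal_iff (by linarith)] at this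
  linarith
end

section
/- Key estimate (inequality (5) in the paper): Let v = B∘u with u : (0,T) → E_1 strongly measurable and v ∈ L^p(0,T;E_2) ∩ L^r(0,T;E_2) with r > 1 and r' = r/(r−1). Fix 0 < t_1 < t_2 < T, an integer N ≥ 1, set h = (t_2−t_1)/N and ξ_i = t_1 + i·h, and let M > 0. Then (1/h) ∫_0^h ∫_{t_1}^{t_2} ‖ v(t) − Σ_{i=1}^{N} v^M(ξ_{i−1}+s) · χ_{(ξ_{i−1},ξ_i]}(t) ‖_{E_2} dt ds ≤ 2 T^{1−1/p} · sup_{σ ∈ [−h,h]} ‖v(·+σ) − v‖_{L^p(0,T−σ;E_2)} + 2 (meas G_u^M)^{1/r'} · ‖v − B(0)‖_{L^r(0,T;E_2)}, where χ_{(ξ_{i−1},ξ_i]} denotes the characteristic function of the interval (ξ_{i−1}, ξ_i]. -/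
open MeasureTheory
open scoped ENNReal

namespace MaitreAux

lemma map_add_restrict_Ioc (a b c : ℝ) :
    Measure.map (fun s => a + s) (volume.restrict (Set.Ioc b c))
      = volume.restrict (Set.Ioc (a + b) (a + c)) := by
  have h1 : (fun s : ℝ => a + s) ⁻¹' Set.Ioc (a + b) (a + c) = Set.Ioc b c := by
    ext x; simp [Set.mem_Ioc]
  conv_lhs => rw [← h1]
  rw [← Measure.restrict_map (measurable_const_add a) measurableSet_Ioc,
    (measurePreserving_add_left volume a).map_eq]

lemma lintegral_Ioc_add (f : ℝ → ℝ≥0∞) (a b c : ℝ) :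
    ∫⁻ t in Set.Ioc (a + b) (a + c), f t = ∫⁻ s in Set.Ioc b c, f (a + s) := by
  rw [← map_add_restrict_Ioc a b c]
  exact lintegral_map_equiv f (Homeomorph.addLeft a).toMeasurableEquiv

lemma lintegral_Ioc_partition (f : ℝ → ℝ≥0∞) (a d : ℝ) (hd : 0 ≤ d) (n : ℕ) :
    ∫⁻ t in Set.Ioc a (a + n * d), f t
      = ∑ i ∈ Finset.range n, ∫⁻ t in Set.Ioc (a + i * d) (a + (i + 1) * d), f t := by
  induction n with
  | zero => simp
  | succ n ih =>
      have h1 : a ≤ a + n * d := le_add_of_nonneg_right (by positivity)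
      have h2 : a + n * d ≤ a + (n + 1 : ℕ) * d := by
        have : (n : ℝ) * d ≤ ((n : ℕ) + 1 : ℝ) * d := by nlinarith
        push_cast
        linarith
      have hsplit : Set.Ioc a (a + ((n : ℕ) + 1 : ℕ) * d)
          = Set.Ioc a (a + n * d) ∪ Set.Ioc (a + n * d) (a + ((n : ℕ) + 1 : ℕ) * d) :=
        (Set.Ioc_union_Ioc_eq_Ioc h1 h2).symm
      rw [hsplit, lintegral_union measurableSet_Ioc (Set.Ioc_disjoint_Ioc_of_le le_rfl), ih,
        Finset.sum_range_succ]
      norm_cast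


lemma sum_indicator_Ioc {β : Type*} [AddCommMonoid β] (a d : ℝ) (N : ℕ) (f : ℕ → ℝ → β)
    {j : ℕ} (hj : j < N) {t : ℝ} (ht : t ∈ Set.Ioc (a + j * d) (a + (j + 1) * d)) :
    ∑ i ∈ Finset.range N,
        Set.indicator (Set.Ioc (a + i * d) (a + (i + 1) * d)) (f i) t = f j t := by
  have hd : 0 < d := by nlinarith [ht.1.trans_le ht.2]
  rw [Finset.sum_eq_single_of_mem j (Finset.mem_range.2 hj)]
  · exact Set.indicator_of_mem ht _
  · intro i _ hij
    apply Set.indicator_of_notMem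
    intro hti
    rcases lt_or_gt_of_ne hij with hlt | hgt
    · have hc : (i : ℝ) + 1 ≤ j := by exact_mod_cast hlt
      have := hti.2; have := ht.1; nlinarith
    · have hc : (j : ℝ) + 1 ≤ i := by exact_mod_cast hgt
      have := hti.1; have := ht.2; nlinarith

lemma nnnorm_sub_rev {E : Type*} [SeminormedAddCommGroup E] (a b : E) :
    ‖a - b‖₊ = ‖b - a‖₊ := by
  ext
  exact norm_sub_rev a b

lemma enn_triangle {E : Type*} [SeminormedAddCommGroup E] (a b c : E) :
    (‖a - c‖₊ : ℝ≥0∞) ≤ (‖a - b‖₊ : ℝ≥0∞) + ‖b - c‖₊ := by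
  have h : a - c = (a - b) + (b - c) := by abel
  rw [h]
  exact_mod_cast nnnorm_add_le _ _

lemma qmp_add_Ioc (a b c b' c' : ℝ) (h1 : b' ≤ a + b) (h2 : a + c ≤ c') :
    Measure.QuasiMeasurePreserving (fun s => a + s)
      (volume.restrict (Set.Ioc b c)) (volume.restrict (Set.Ioc b' c')) := by
  refine ⟨measurable_const_add a, ?_⟩
  rw [map_add_restrict_Ioc]
  exact Measure.absolutelyContinuous_of_le
    (Measure.restrict_mono (Set.Ioc_subset_Ioc h1 h2) le_rfl)

lemma prod_add_null {N : Set ℝ} (hNm : MeasurableSet N) (hN : volume N = 0) (A B : Set ℝ) :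
    ((volume.restrict A).prod (volume.restrict B)) {z : ℝ × ℝ | z.1 + z.2 ∈ N} = 0 := by
  have hS : MeasurableSet {z : ℝ × ℝ | z.1 + z.2 ∈ N} :=
    (measurable_fst.add measurable_snd) hNm
  rw [Measure.prod_apply hS]
  have hz : ∀ x : ℝ, (volume.restrict B) (Prod.mk x ⁻¹' {z : ℝ × ℝ | z.1 + z.2 ∈ N}) = 0 := by
    intro x
    have hpre : Prod.mk x ⁻¹' {z : ℝ × ℝ | z.1 + z.2 ∈ N} = (fun y => x + y) ⁻¹' N := rfl
    rw [hpre, Measure.restrict_apply (measurable_const_add x hNm)]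
    refine measure_mono_null Set.inter_subset_left ?_
    rw [(measurePreserving_add_left volume x).measure_preimage hNm.nullMeasurableSet]
    exact hN
  rw [lintegral_congr fun x => hz x]
  simp

lemma prod_fst_null {N : Set ℝ} {A : Set ℝ} (hN : volume.restrict A N = 0) (B : Set ℝ) :
    ((volume.restrict A).prod (volume.restrict B)) {z : ℝ × ℝ | z.1 ∈ N} = 0 := by
  have hset : {z : ℝ × ℝ | z.1 ∈ N} = N ×ˢ (Set.univ : Set ℝ) := by ext z; simp
  rw [hset, Measure.prod_prod, hN, zero_mul]

lemma aemeasurable_lintegral_right {α β : Type*} [MeasurableSpace α] [MeasurableSpace β]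
    {μ : Measure α} {ν : Measure β} [SFinite ν] {f : α × β → ℝ≥0∞}
    (hf : AEMeasurable f (μ.prod ν)) :
    AEMeasurable (fun x => ∫⁻ y, f (x, y) ∂ν) μ := by
  refine ⟨fun x => ∫⁻ y, hf.mk f (x, y) ∂ν, hf.measurable_mk.lintegral_prod_right', ?_⟩
  filter_upwards [Measure.ae_ae_of_ae_prod hf.ae_eq_mk] with x hx
  exact lintegral_congr_ae hx

end MaitreAux

open MaitreAux

set_option maxHeartbeats 2000000 in
/-- **Key estimate (inequality (5)) in the proof of Lemma 1 of Maitre** :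
`(1/h) ∫₀ʰ ∫_{t₁}^{t₂} ‖v(t) − ∑ᵢ v^M(ξ_{i-1}+s) χ_{(ξ_{i-1},ξᵢ]}(t)‖ dt ds`
is bounded by
`2 T^{1-1/p} sup_{σ∈[-h,h]} ‖v(·+σ)−v‖_{L^p} + 2 (meas G_u^M)^{1/r'} ‖v−B(0)‖_{L^r}`,
where `v = B ∘ u`, `v^M = B ∘ u^M`, `h = (t₂-t₁)/N`, `ξᵢ = t₁ + i h` and
`r' = r/(r-1)`.  The translation norm `‖v(·+σ)−v‖_{L^p}` is taken over the
common interval of definition. -/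
theorem maitre_key_estimate
    {E₁ E₂ : Type*} [NormedAddCommGroup E₁] [NormedSpace ℝ E₁] [CompleteSpace E₁]
    [NormedAddCommGroup E₂] [NormedSpace ℝ E₂] [CompleteSpace E₂]
    (T : ℝ) (hT : 0 < T) (p : ℝ≥0∞) (hp : 1 ≤ p)
    (B : E₁ → E₂) (u : ℝ → E₁)
    (hu : AEStronglyMeasurable u (volume.restrict (Set.Ioc 0 T)))
    (r : ℝ) (hr : 1 < r)
    -- `v = B ∘ u` belongs to `L^p(0,T;E₂) ∩ L^r(0,T;E₂)`
    (hvp : MemLp (B ∘ u) p (volume.restrict (Set.Ioc 0 T)))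
    (hvr : MemLp (B ∘ u) (ENNReal.ofReal r) (volume.restrict (Set.Ioc 0 T)))
    (t₁ t₂ : ℝ) (ht₁ : 0 < t₁) (ht₁₂ : t₁ < t₂) (ht₂ : t₂ < T)
    (N : ℕ) (hN : 1 ≤ N) (h : ℝ) (hh : h = (t₂ - t₁) / N)
    (M : ℝ) (hM : 0 < M) :
    (ENNReal.ofReal h)⁻¹ *
        ∫⁻ s in Set.Ioc (0:ℝ) h, ∫⁻ t in Set.Ioc t₁ t₂,
          (‖B (u t) - ∑ i ∈ Finset.range N,
              Set.indicator (Set.Ioc (t₁ + i * h) (t₁ + (i + 1) * h))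
                (fun _ => B (truncAtHeight T M u (t₁ + i * h + s))) t‖₊ : ℝ≥0∞)
      ≤ 2 * ENNReal.ofReal (T ^ (1 - 1/p).toReal) *
          (⨆ σ ∈ Set.Icc (-h) h,
            eLpNorm (fun t => B (u (t + σ)) - B (u t)) p
              (volume.restrict (Set.Ioc (max 0 (-σ)) (min T (T - σ))))) +
        2 * (volume {t : ℝ | t ∈ Set.Icc 0 T ∧ M < ‖u t‖}) ^ (1 / (r / (r - 1))) *
          eLpNorm (fun t => B (u t) - B 0) (ENNReal.ofReal r)
            (volume.restrict (Set.Ioc 0 T)) := by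
  classical
  have hN0 : (0:ℝ) < N := by exact_mod_cast Nat.lt_of_lt_of_le Nat.zero_lt_one hN
  have hh0 : 0 < h := by rw [hh]; exact div_pos (by linarith) hN0
  have hNh : t₁ + (N:ℝ) * h = t₂ := by rw [hh]; field_simp; ring
  have hr1 : (0:ℝ) < r - 1 := by linarith
  have hr0 : (0:ℝ) < r := by linarith
  have hrc : (0:ℝ) < r / (r - 1) := div_pos hr0 hr1
  have hv1 : AEStronglyMeasurable (fun t => B (u t)) (volume.restrict (Set.Ioc (0:ℝ) T)) :=
    hvp.aestronglyMeasurable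
  set E := ENNReal.ofReal (T ^ (1 - 1/p).toReal) with hE
  set SupT := ⨆ σ ∈ Set.Icc (-h) h,
      eLpNorm (fun t => B (u (t + σ)) - B (u t)) p
        (volume.restrict (Set.Ioc (max 0 (-σ)) (min T (T - σ)))) with hSupT
  set Lr := eLpNorm (fun t => B (u t) - B 0) (ENNReal.ofReal r)
      (volume.restrict (Set.Ioc (0:ℝ) T)) with hLr
  set VG := (volume {t : ℝ | t ∈ Set.Icc 0 T ∧ M < ‖u t‖}) ^ (1 / (r / (r - 1))) with hVG
  -- measurable representative of `v = B ∘ u`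
  set vm := hv1.mk (fun t => B (u t)) with hvmdef
  have hvm_meas : StronglyMeasurable vm := hv1.stronglyMeasurable_mk
  obtain ⟨Nv, hNvm, hNv0, hNv⟩ : ∃ Nv : Set ℝ, MeasurableSet Nv ∧ volume Nv = 0 ∧
      ∀ τ ∈ Set.Ioc (0:ℝ) T, τ ∉ Nv → B (u τ) = vm τ := by
    have h0 : (volume.restrict (Set.Ioc (0:ℝ) T)) {τ | ¬ B (u τ) = vm τ} = 0 :=
      ae_iff.1 hv1.ae_eq_mk
    rw [Measure.restrict_apply' measurableSet_Ioc] at h0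
    refine ⟨toMeasurable volume ({τ | ¬ B (u τ) = vm τ} ∩ Set.Ioc 0 T),
      measurableSet_toMeasurable _ _, by rwa [measure_toMeasurable], ?_⟩
    intro τ hτ hτN
    by_contra hne
    exact hτN (subset_toMeasurable _ _ ⟨hne, hτ⟩)
  -- basic interval inclusions
  have hIocsub : ∀ i : ℕ, i < N →
      Set.Ioc (t₁ + (i:ℝ) * h) (t₁ + ((i:ℝ) + 1) * h) ⊆ Set.Ioc (0:ℝ) T := by
    intro i hi
    refine Set.Ioc_subset_Ioc ?_ ?_
    · have : (0:ℝ) ≤ (i:ℝ) * h := by positivity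
      linarith
    · have h1 : ((i:ℝ) + 1) ≤ (N:ℝ) := by exact_mod_cast hi
      have h2 : ((i:ℝ) + 1) * h ≤ (N:ℝ) * h := by nlinarith
      linarith
  -- the Hölder bound
  have hHolder : ∫⁻ τ in Set.Ioc (0:ℝ) T,
      (‖B (u τ) - B (truncAtHeight T M u τ)‖₊ : ℝ≥0∞) ≤ VG * Lr := by
    have hbind : ∀ τ : ℝ, (‖B (u τ) - B (truncAtHeight T M u τ)‖₊ : ℝ≥0∞)
        = Set.indicator {t : ℝ | t ∈ Set.Icc 0 T ∧ M < ‖u t‖}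
            (fun τ' => (‖B (u τ') - B 0‖₊ : ℝ≥0∞)) τ := by
      intro τ
      by_cases hc : τ ∈ Set.Icc 0 T ∧ M < ‖u τ‖
      · rw [truncAtHeight, if_pos hc,
          Set.indicator_of_mem (show τ ∈ {t : ℝ | t ∈ Set.Icc 0 T ∧ M < ‖u t‖} from hc)]
      · rw [truncAtHeight, if_neg hc,
          Set.indicator_of_notMem (show τ ∉ {t : ℝ | t ∈ Set.Icc 0 T ∧ M < ‖u t‖} from hc)]
        simp
    simp only [hbind]
    set S := toMeasurable (volume.restrict (Set.Ioc (0:ℝ) T))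
      {t : ℝ | t ∈ Set.Icc 0 T ∧ M < ‖u t‖} with hSdef
    have hSsub : {t : ℝ | t ∈ Set.Icc 0 T ∧ M < ‖u t‖} ⊆ S := subset_toMeasurable _ _
    have hSm : MeasurableSet S := measurableSet_toMeasurable _ _
    refine le_trans (lintegral_mono fun τ =>
      Set.indicator_le_indicator_of_subset hSsub (fun _ => zero_le) τ) ?_
    have hprod : ∀ τ, Set.indicator S (fun τ' => (‖B (u τ') - B 0‖₊ : ℝ≥0∞)) τ
        = (‖B (u τ) - B 0‖₊ : ℝ≥0∞) * S.indicator (fun _ => (1:ℝ≥0∞)) τ := by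
      intro τ; by_cases hτ : τ ∈ S <;> simp [hτ]
    rw [lintegral_congr hprod]
    have hpq : Real.HolderConjugate r (r / (r - 1)) := Real.HolderConjugate.conjExponent hr
    have hf0 : AEMeasurable (fun τ' => (‖B (u τ') - B 0‖₊ : ℝ≥0∞))
        (volume.restrict (Set.Ioc (0:ℝ) T)) :=
      (hvr.aestronglyMeasurable.sub aestronglyMeasurable_const).enorm
    have hg0 : AEMeasurable (S.indicator (fun _ => (1:ℝ≥0∞)))
        (volume.restrict (Set.Ioc (0:ℝ) T)) :=
      (measurable_const.indicator hSm).aemeasurable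
    refine le_trans
      (ENNReal.lintegral_mul_le_Lp_mul_Lq (volume.restrict (Set.Ioc (0:ℝ) T)) hpq hf0 hg0) ?_
    have hfint : (∫⁻ τ in Set.Ioc (0:ℝ) T, ((‖B (u τ) - B 0‖₊ : ℝ≥0∞)) ^ r) ^ (1/r) = Lr := by
      rw [hLr, eLpNorm_eq_lintegral_rpow_enorm_toReal (ENNReal.ofReal_pos.2 hr0).ne'
        ENNReal.ofReal_ne_top, ENNReal.toReal_ofReal hr0.le]
      rfl
    have hgint : (∫⁻ τ in Set.Ioc (0:ℝ) T,
        (S.indicator (fun _ => (1:ℝ≥0∞)) τ) ^ (r / (r - 1))) ^ (1/(r / (r - 1))) ≤ VG := by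
      have hgpow : ∀ τ, (S.indicator (fun _ => (1:ℝ≥0∞)) τ) ^ (r / (r - 1))
          = S.indicator (fun _ => (1:ℝ≥0∞)) τ := by
        intro τ; by_cases hτ : τ ∈ S <;> simp [hτ, ENNReal.zero_rpow_of_pos hrc]
      rw [lintegral_congr hgpow, lintegral_indicator hSm, setLIntegral_one, hSdef,
        measure_toMeasurable, hVG]
      refine ENNReal.rpow_le_rpow ?_ (le_of_lt (by positivity))
      rw [Measure.restrict_apply' measurableSet_Ioc]
      exact measure_mono Set.inter_subset_left
    calc (∫⁻ τ in Set.Ioc (0:ℝ) T, ((‖B (u τ) - B 0‖₊ : ℝ≥0∞)) ^ r) ^ (1/r) *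
          (∫⁻ τ in Set.Ioc (0:ℝ) T,
            (S.indicator (fun _ => (1:ℝ≥0∞)) τ) ^ (r / (r - 1))) ^ (1/(r / (r - 1)))
        ≤ Lr * VG := mul_le_mul' (le_of_eq hfint) hgint
      _ = VG * Lr := mul_comm _ _
  -- translation quasi-measure-preserving maps
  have hshift : ∀ i : ℕ, i < N → Measure.QuasiMeasurePreserving (fun s => t₁ + (i:ℝ) * h + s)
      (volume.restrict (Set.Ioc (0:ℝ) h)) (volume.restrict (Set.Ioc (0:ℝ) T)) := by
    intro i hi
    refine qmp_add_Ioc (t₁ + (i:ℝ) * h) 0 h 0 T ?_ ?_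
    · have : (0:ℝ) ≤ (i:ℝ) * h := by positivity
      linarith
    · have h1 : ((i:ℝ) + 1) ≤ (N:ℝ) := by exact_mod_cast hi
      have h2 : ((i:ℝ) + 1) * h ≤ (N:ℝ) * h := by nlinarith
      nlinarith [hNh]
  -- AE measurability of the truncation error, shifted
  have hbi : ∀ i : ℕ, i < N → AEMeasurable
      (fun s => (‖B (u (t₁ + (i:ℝ) * h + s)) -
        B (truncAtHeight T M u (t₁ + (i:ℝ) * h + s))‖₊ : ℝ≥0∞))
      (volume.restrict (Set.Ioc (0:ℝ) h)) := by
    set um := hu.mk u with humdef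
    have hum_meas : StronglyMeasurable um := hu.stronglyMeasurable_mk
    have hum_ae : u =ᵐ[volume.restrict (Set.Ioc (0:ℝ) T)] um := hu.ae_eq_mk
    have hvm_ae : (fun t => B (u t)) =ᵐ[volume.restrict (Set.Ioc (0:ℝ) T)] vm := hv1.ae_eq_mk
    set wfun : ℝ → ℝ≥0∞ := fun τ =>
      Set.indicator {x : ℝ | M < ‖um x‖} (fun x => (‖vm x - B 0‖₊ : ℝ≥0∞)) τ with hwdef
    have hw_meas : Measurable wfun := by
      rw [hwdef]
      exact Measurable.indicator ((hvm_meas.sub stronglyMeasurable_const).enorm)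
        (measurableSet_lt measurable_const hum_meas.norm.measurable)
    have hw_ae : (fun τ => (‖B (u τ) - B (truncAtHeight T M u τ)‖₊ : ℝ≥0∞))
        =ᵐ[volume.restrict (Set.Ioc (0:ℝ) T)] wfun := by
      filter_upwards [hvm_ae, hum_ae, ae_restrict_mem measurableSet_Ioc]
        with τ h1 h2 h3
      by_cases hc : τ ∈ Set.Icc 0 T ∧ M < ‖u τ‖
      · rw [truncAtHeight, if_pos hc]
        have hmem : τ ∈ {x : ℝ | M < ‖um x‖} := by
          simp only [Set.mem_setOf_eq, ← h2]; exact hc.2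
        simp only [hwdef]
        rw [Set.indicator_of_mem hmem, h1]
      · rw [truncAtHeight, if_neg hc]
        have hnmem : τ ∉ {x : ℝ | M < ‖um x‖} := by
          simp only [Set.mem_setOf_eq, ← h2]
          intro hcon
          exact hc ⟨⟨h3.1.le, h3.2⟩, hcon⟩
        simp only [hwdef]
        rw [Set.indicator_of_notMem hnmem]
        simp
    intro i hi
    exact ((hw_meas.comp (measurable_const_add (t₁ + (i:ℝ) * h))).aemeasurable).congr
      ((hshift i hi).ae_eq hw_ae).symm
  -- product-measurability of the main integrand
  have hfi : ∀ i : ℕ, i < N → AEMeasurable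
      (fun z : ℝ × ℝ => (‖B (u z.2) - B (u (t₁ + (i:ℝ) * h + z.1))‖₊ : ℝ≥0∞))
      ((volume.restrict (Set.Ioc (0:ℝ) h)).prod
        (volume.restrict (Set.Ioc (t₁ + (i:ℝ) * h) (t₁ + ((i:ℝ) + 1) * h)))) := by
    intro i hi
    have h1 : AEStronglyMeasurable (fun z : ℝ × ℝ => B (u z.2))
        ((volume.restrict (Set.Ioc (0:ℝ) h)).prod
          (volume.restrict (Set.Ioc (t₁ + (i:ℝ) * h) (t₁ + ((i:ℝ) + 1) * h)))) :=
      (hv1.mono_measure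
        (Measure.restrict_mono (hIocsub i hi) le_rfl)).comp_quasiMeasurePreserving
        Measure.quasiMeasurePreserving_snd
    have h2 : AEStronglyMeasurable (fun z : ℝ × ℝ => B (u (t₁ + (i:ℝ) * h + z.1)))
        ((volume.restrict (Set.Ioc (0:ℝ) h)).prod
          (volume.restrict (Set.Ioc (t₁ + (i:ℝ) * h) (t₁ + ((i:ℝ) + 1) * h)))) :=
      (hv1.comp_quasiMeasurePreserving (hshift i hi)).comp_quasiMeasurePreserving
        Measure.quasiMeasurePreserving_fst
    exact (h1.sub h2).enorm
  set gI : ℕ → ℝ → ℝ → ℝ≥0∞ := fun i t σ =>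
    (Set.Ioc (t₁ + (i:ℝ) * h) (t₁ + ((i:ℝ) + 1) * h)).indicator
        (fun _ => (1:ℝ≥0∞)) (t + σ) * (‖B (u (t + σ)) - B (u t)‖₊ : ℝ≥0∞) with hgI
  have hgim : ∀ i : ℕ, i < N → AEMeasurable (fun z : ℝ × ℝ => gI i z.1 z.2)
      ((volume.restrict (Set.Ioc (t₁ + (i:ℝ) * h) (t₁ + ((i:ℝ) + 1) * h))).prod
        (volume.restrict (Set.Ioc (-h) h))) := by
    intro i hi
    refine ⟨fun z => (Set.Ioc (t₁ + (i:ℝ) * h) (t₁ + ((i:ℝ) + 1) * h)).indicator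
        (fun _ => (1:ℝ≥0∞)) (z.1 + z.2) * (‖vm (z.1 + z.2) - vm z.1‖₊ : ℝ≥0∞), ?_, ?_⟩
    · refine Measurable.mul ?_ ?_
      · exact (measurable_const.indicator measurableSet_Ioc).comp
          (measurable_fst.add measurable_snd)
      · exact ((hvm_meas.comp_measurable (measurable_fst.add measurable_snd)).sub
          (hvm_meas.comp_measurable measurable_fst)).enorm
    · have hbad : ((volume.restrict (Set.Ioc (t₁ + (i:ℝ) * h) (t₁ + ((i:ℝ) + 1) * h))).prod
          (volume.restrict (Set.Ioc (-h) h)))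
          ({z : ℝ × ℝ | z.1 + z.2 ∈ Nv} ∪ ({z : ℝ × ℝ | z.1 ∈ Nv} ∪
            {z : ℝ × ℝ | z.1 ∈ (Set.Ioc (t₁ + (i:ℝ) * h) (t₁ + ((i:ℝ) + 1) * h))ᶜ})) = 0 := by
        refine measure_union_null (prod_add_null hNvm hNv0 _ _)
          (measure_union_null (prod_fst_null ?_ _) (prod_fst_null ?_ _))
        · rw [Measure.restrict_apply' measurableSet_Ioc]
          exact measure_mono_null Set.inter_subset_left hNv0
        · rw [Measure.restrict_apply' measurableSet_Ioc, Set.compl_inter_self]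
          exact measure_empty
      have hae : ∀ᵐ z ∂((volume.restrict (Set.Ioc (t₁ + (i:ℝ) * h) (t₁ + ((i:ℝ) + 1) * h))).prod
          (volume.restrict (Set.Ioc (-h) h))),
          z ∉ ({z : ℝ × ℝ | z.1 + z.2 ∈ Nv} ∪ ({z : ℝ × ℝ | z.1 ∈ Nv} ∪
            {z : ℝ × ℝ | z.1 ∈ (Set.Ioc (t₁ + (i:ℝ) * h) (t₁ + ((i:ℝ) + 1) * h))ᶜ})) := by
        rw [ae_iff]
        rw [show {z : ℝ × ℝ | ¬ z ∉ ({z : ℝ × ℝ | z.1 + z.2 ∈ Nv} ∪ ({z : ℝ × ℝ | z.1 ∈ Nv} ∪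
            {z : ℝ × ℝ | z.1 ∈ (Set.Ioc (t₁ + (i:ℝ) * h) (t₁ + ((i:ℝ) + 1) * h))ᶜ}))}
          = ({z : ℝ × ℝ | z.1 + z.2 ∈ Nv} ∪ ({z : ℝ × ℝ | z.1 ∈ Nv} ∪
            {z : ℝ × ℝ | z.1 ∈ (Set.Ioc (t₁ + (i:ℝ) * h) (t₁ + ((i:ℝ) + 1) * h))ᶜ}))
          from by ext z; simp only [Set.mem_setOf_eq, not_not]]
        exact hbad
      filter_upwards [hae] with z hz
      simp only [Set.mem_union, Set.mem_setOf_eq, Set.mem_compl_iff, not_or, not_not] at hz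
      obtain ⟨hz1, hz2, hz3⟩ := hz
      simp only [hgI]
      by_cases hmem : z.1 + z.2 ∈ Set.Ioc (t₁ + (i:ℝ) * h) (t₁ + ((i:ℝ) + 1) * h)
      · rw [Set.indicator_of_mem hmem, one_mul, one_mul,
          hNv _ (hIocsub i hi hmem) hz1, hNv _ (hIocsub i hi hz3) hz2]
      · rw [Set.indicator_of_notMem hmem, zero_mul, zero_mul]
  set Xf : ℝ → ℝ≥0∞ := fun s => ∑ i ∈ Finset.range N,
    ∫⁻ t in Set.Ioc (t₁ + (i:ℝ) * h) (t₁ + ((i:ℝ) + 1) * h),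
      (‖B (u t) - B (u (t₁ + (i:ℝ) * h + s))‖₊ : ℝ≥0∞) with hXf
  set Yf : ℝ → ℝ≥0∞ := fun s => (∑ i ∈ Finset.range N,
    (‖B (u (t₁ + (i:ℝ) * h + s)) -
      B (truncAtHeight T M u (t₁ + (i:ℝ) * h + s))‖₊ : ℝ≥0∞)) * ENNReal.ofReal h with hYf
  have hstep1 : ∀ s : ℝ,
      (∫⁻ t in Set.Ioc t₁ t₂, (‖B (u t) - ∑ i ∈ Finset.range N,
          Set.indicator (Set.Ioc (t₁ + i * h) (t₁ + (i + 1) * h))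
            (fun _ => B (truncAtHeight T M u (t₁ + i * h + s))) t‖₊ : ℝ≥0∞))
        ≤ Xf s + Yf s := by
    intro s
    rw [show Set.Ioc t₁ t₂ = Set.Ioc t₁ (t₁ + (N:ℝ) * h) from by rw [hNh],
      lintegral_Ioc_partition _ t₁ h hh0.le N]
    have hpiece : ∀ i ∈ Finset.range N,
        (∫⁻ t in Set.Ioc (t₁ + (i:ℝ) * h) (t₁ + ((i:ℝ) + 1) * h),
          (‖B (u t) - ∑ j ∈ Finset.range N,
            Set.indicator (Set.Ioc (t₁ + j * h) (t₁ + (j + 1) * h))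
              (fun _ => B (truncAtHeight T M u (t₁ + j * h + s))) t‖₊ : ℝ≥0∞))
          ≤ (∫⁻ t in Set.Ioc (t₁ + (i:ℝ) * h) (t₁ + ((i:ℝ) + 1) * h),
              (‖B (u t) - B (u (t₁ + (i:ℝ) * h + s))‖₊ : ℝ≥0∞))
            + (‖B (u (t₁ + (i:ℝ) * h + s)) -
                B (truncAtHeight T M u (t₁ + (i:ℝ) * h + s))‖₊ : ℝ≥0∞) * ENNReal.ofReal h := by
      intro i hi
      have hcol : (∫⁻ t in Set.Ioc (t₁ + (i:ℝ) * h) (t₁ + ((i:ℝ) + 1) * h),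
          (‖B (u t) - ∑ j ∈ Finset.range N,
            Set.indicator (Set.Ioc (t₁ + j * h) (t₁ + (j + 1) * h))
              (fun _ => B (truncAtHeight T M u (t₁ + j * h + s))) t‖₊ : ℝ≥0∞))
          = ∫⁻ t in Set.Ioc (t₁ + (i:ℝ) * h) (t₁ + ((i:ℝ) + 1) * h),
              (‖B (u t) - B (truncAtHeight T M u (t₁ + (i:ℝ) * h + s))‖₊ : ℝ≥0∞) := by
        refine setLIntegral_congr_fun measurableSet_Ioc (fun t ht => ?_)
        rw [sum_indicator_Ioc t₁ h N _ (Finset.mem_range.1 hi) ht]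
      rw [hcol]
      calc ∫⁻ t in Set.Ioc (t₁ + (i:ℝ) * h) (t₁ + ((i:ℝ) + 1) * h),
            (‖B (u t) - B (truncAtHeight T M u (t₁ + (i:ℝ) * h + s))‖₊ : ℝ≥0∞)
          ≤ ∫⁻ t in Set.Ioc (t₁ + (i:ℝ) * h) (t₁ + ((i:ℝ) + 1) * h),
            ((‖B (u t) - B (u (t₁ + (i:ℝ) * h + s))‖₊ : ℝ≥0∞)
              + (‖B (u (t₁ + (i:ℝ) * h + s)) -
                  B (truncAtHeight T M u (t₁ + (i:ℝ) * h + s))‖₊ : ℝ≥0∞)) :=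
            lintegral_mono fun t => enn_triangle _ _ _
        _ = (∫⁻ t in Set.Ioc (t₁ + (i:ℝ) * h) (t₁ + ((i:ℝ) + 1) * h),
              (‖B (u t) - B (u (t₁ + (i:ℝ) * h + s))‖₊ : ℝ≥0∞))
            + (‖B (u (t₁ + (i:ℝ) * h + s)) -
                B (truncAtHeight T M u (t₁ + (i:ℝ) * h + s))‖₊ : ℝ≥0∞) * ENNReal.ofReal h := by
            rw [lintegral_add_right _ measurable_const, setLIntegral_const, Real.volume_Ioc,
              show t₁ + ((i:ℝ) + 1) * h - (t₁ + (i:ℝ) * h) = h from by ring]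
    refine le_trans (Finset.sum_le_sum hpiece) ?_
    rw [Finset.sum_add_distrib, ← Finset.sum_mul]
  have hYmeas : AEMeasurable Yf (volume.restrict (Set.Ioc (0:ℝ) h)) := by
    rw [hYf]
    exact (Finset.aemeasurable_fun_sum _ (fun i hi => hbi i (Finset.mem_range.1 hi))).mul_const _
  have hIntY : ∫⁻ s in Set.Ioc (0:ℝ) h, Yf s ≤ ENNReal.ofReal h * (VG * Lr) := by
    have h1 : ∫⁻ s in Set.Ioc (0:ℝ) h, Yf s
        = (∑ i ∈ Finset.range N, ∫⁻ s in Set.Ioc (0:ℝ) h,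
            (‖B (u (t₁ + (i:ℝ) * h + s)) -
              B (truncAtHeight T M u (t₁ + (i:ℝ) * h + s))‖₊ : ℝ≥0∞)) * ENNReal.ofReal h := by
      simp only [hYf]
      rw [lintegral_mul_const' _ _ ENNReal.ofReal_ne_top,
        lintegral_finset_sum' _ (fun i hi => hbi i (Finset.mem_range.1 hi))]
    have h2 : ∀ i ∈ Finset.range N, ∫⁻ s in Set.Ioc (0:ℝ) h,
        (‖B (u (t₁ + (i:ℝ) * h + s)) -
          B (truncAtHeight T M u (t₁ + (i:ℝ) * h + s))‖₊ : ℝ≥0∞)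
        = ∫⁻ τ in Set.Ioc (t₁ + (i:ℝ) * h) (t₁ + ((i:ℝ) + 1) * h),
            (‖B (u τ) - B (truncAtHeight T M u τ)‖₊ : ℝ≥0∞) := by
      intro i hi
      have e1 := lintegral_Ioc_add
        (fun τ => (‖B (u τ) - B (truncAtHeight T M u τ)‖₊ : ℝ≥0∞)) (t₁ + (i:ℝ) * h) 0 h
      rw [show t₁ + (i:ℝ) * h + 0 = t₁ + (i:ℝ) * h from by ring,
        show t₁ + (i:ℝ) * h + h = t₁ + ((i:ℝ) + 1) * h from by ring] at e1
      exact e1.symm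
    rw [h1, Finset.sum_congr rfl h2, ← lintegral_Ioc_partition _ t₁ h hh0.le N, mul_comm]
    refine mul_le_mul_right ?_ _
    refine le_trans (lintegral_mono_set ?_) hHolder
    rw [hNh]
    exact Set.Ioc_subset_Ioc ht₁.le ht₂.le
  have hIntX : ∫⁻ s in Set.Ioc (0:ℝ) h, Xf s ≤ (SupT * E) * ENNReal.ofReal (2 * h) := by
    have he' : 1 / (1:ℝ≥0∞).toReal - 1 / p.toReal = (1 - 1/p).toReal := by
      rcases eq_or_ne p ⊤ with hp' | hp'
      · simp [hp']
      · have hple : 1/p ≤ (1:ℝ≥0∞) := by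
          rw [one_div]; exact ENNReal.inv_le_one.2 hp
        rw [ENNReal.toReal_sub_of_le hple ENNReal.one_ne_top]
        simp [one_div, ENNReal.toReal_inv]
    have hfinal : ∀ σ ∈ Set.Ioc (-h) h,
        (∑ i ∈ Finset.range N,
          ∫⁻ t in Set.Ioc (t₁ + (i:ℝ)*h) (t₁ + ((i:ℝ)+1)*h), gI i t σ) ≤ SupT * E := by
      intro σ hσ
      have hD : ∀ i ∈ Finset.range N,
          ∫⁻ t in Set.Ioc (t₁ + (i:ℝ)*h) (t₁ + ((i:ℝ)+1)*h), gI i t σ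
          = ∫⁻ t in ({t : ℝ | t + σ ∈ Set.Ioc (t₁ + (i:ℝ)*h) (t₁ + ((i:ℝ)+1)*h)}
              ∩ Set.Ioc (t₁ + (i:ℝ)*h) (t₁ + ((i:ℝ)+1)*h)),
              (‖B (u (t + σ)) - B (u t)‖₊ : ℝ≥0∞) := by
        intro i hi
        have hmB : MeasurableSet
            {t : ℝ | t + σ ∈ Set.Ioc (t₁ + (i:ℝ)*h) (t₁ + ((i:ℝ)+1)*h)} :=
          (measurable_add_const σ) measurableSet_Ioc
        have hptw : ∀ t, gI i t σ = Set.indicator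
            {t' : ℝ | t' + σ ∈ Set.Ioc (t₁ + (i:ℝ)*h) (t₁ + ((i:ℝ)+1)*h)}
            (fun t' => (‖B (u (t' + σ)) - B (u t')‖₊ : ℝ≥0∞)) t := by
          intro t
          simp only [hgI]
          by_cases hmem : t + σ ∈ Set.Ioc (t₁ + (i:ℝ)*h) (t₁ + ((i:ℝ)+1)*h)
          · rw [Set.indicator_of_mem hmem, one_mul, Set.indicator_of_mem
              (show t ∈ {t' : ℝ | t' + σ ∈ Set.Ioc (t₁ + (i:ℝ)*h) (t₁ + ((i:ℝ)+1)*h)}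
                from hmem)]
          · rw [Set.indicator_of_notMem hmem, zero_mul, Set.indicator_of_notMem
              (show t ∉ {t' : ℝ | t' + σ ∈ Set.Ioc (t₁ + (i:ℝ)*h) (t₁ + ((i:ℝ)+1)*h)}
                from hmem)]
        calc ∫⁻ t in Set.Ioc (t₁ + (i:ℝ)*h) (t₁ + ((i:ℝ)+1)*h), gI i t σ
            = ∫⁻ t in Set.Ioc (t₁ + (i:ℝ)*h) (t₁ + ((i:ℝ)+1)*h), Set.indicator
                {t' : ℝ | t' + σ ∈ Set.Ioc (t₁ + (i:ℝ)*h) (t₁ + ((i:ℝ)+1)*h)}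
                (fun t' => (‖B (u (t' + σ)) - B (u t')‖₊ : ℝ≥0∞)) t :=
              lintegral_congr hptw
          _ = ∫⁻ t in {t' : ℝ | t' + σ ∈ Set.Ioc (t₁ + (i:ℝ)*h) (t₁ + ((i:ℝ)+1)*h)},
                (‖B (u (t + σ)) - B (u t)‖₊ : ℝ≥0∞)
                ∂(volume.restrict (Set.Ioc (t₁ + (i:ℝ)*h) (t₁ + ((i:ℝ)+1)*h))) :=
              lintegral_indicator hmB _
          _ = ∫⁻ t in ({t : ℝ | t + σ ∈ Set.Ioc (t₁ + (i:ℝ)*h) (t₁ + ((i:ℝ)+1)*h)}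
                ∩ Set.Ioc (t₁ + (i:ℝ)*h) (t₁ + ((i:ℝ)+1)*h)),
                (‖B (u (t + σ)) - B (u t)‖₊ : ℝ≥0∞) := by
              rw [Measure.restrict_restrict hmB]
      rw [Finset.sum_congr rfl hD]
      have hdisj : (↑(Finset.range N) : Set ℕ).PairwiseDisjoint
          (fun i : ℕ => {t : ℝ | t + σ ∈ Set.Ioc (t₁ + (i:ℝ)*h) (t₁ + ((i:ℝ)+1)*h)}
            ∩ Set.Ioc (t₁ + (i:ℝ)*h) (t₁ + ((i:ℝ)+1)*h)) := by
        have key : ∀ a b : ℕ, a < b → Disjoint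
            (Set.Ioc (t₁ + (a:ℝ)*h) (t₁ + ((a:ℝ)+1)*h))
            (Set.Ioc (t₁ + (b:ℝ)*h) (t₁ + ((b:ℝ)+1)*h)) := by
          intro a b hab
          rw [Set.Ioc_disjoint_Ioc]
          have hab' : ((a:ℝ)+1) ≤ (b:ℝ) := by exact_mod_cast hab
          refine le_trans (min_le_left _ _) (le_trans ?_ (le_max_right _ _))
          nlinarith
        intro i _ j _ hij
        rcases lt_or_gt_of_ne hij with hlt | hlt
        · exact Set.disjoint_of_subset Set.inter_subset_right Set.inter_subset_right
            (key _ _ hlt)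
        · exact Set.disjoint_of_subset Set.inter_subset_right Set.inter_subset_right
            (key _ _ hlt).symm
      rw [← lintegral_biUnion_finset hdisj
        (fun i _ => ((measurable_add_const σ) measurableSet_Ioc).inter measurableSet_Ioc) _]
      have hsub : (⋃ i ∈ Finset.range N,
          ({t : ℝ | t + σ ∈ Set.Ioc (t₁ + (i:ℝ)*h) (t₁ + ((i:ℝ)+1)*h)}
            ∩ Set.Ioc (t₁ + (i:ℝ)*h) (t₁ + ((i:ℝ)+1)*h)))
          ⊆ Set.Ioc (max 0 (-σ)) (min T (T - σ)) := by
        refine Set.iUnion₂_subset fun i hi => ?_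
        rintro t ⟨ht1, ht2⟩
        have hiN : i < N := Finset.mem_range.1 hi
        have hl : (0:ℝ) < t₁ + (i:ℝ)*h := by
          have : (0:ℝ) ≤ (i:ℝ)*h := by positivity
          linarith
        have hup : t₁ + ((i:ℝ)+1)*h ≤ T := by
          have h1 : ((i:ℝ)+1) ≤ (N:ℝ) := by exact_mod_cast hiN
          have h2 : ((i:ℝ)+1)*h ≤ (N:ℝ)*h := by nlinarith
          nlinarith [hNh]
        constructor
        · refine max_lt ?_ ?_
          · linarith [ht2.1]
          · linarith [ht1.1]
        · refine le_min ?_ ?_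
          · linarith [ht2.2]
          · linarith [ht1.2]
      refine le_trans (lintegral_mono_set hsub) ?_
      have haesm : AEStronglyMeasurable (fun t => B (u (t + σ)) - B (u t))
          (volume.restrict (Set.Ioc (max 0 (-σ)) (min T (T - σ)))) := by
        refine AEStronglyMeasurable.sub ?_ ?_
        · have heq : (fun t : ℝ => B (u (t + σ))) = fun t : ℝ => B (u (σ + t)) := by
            funext t; rw [add_comm]
          rw [heq]
          refine hv1.comp_quasiMeasurePreserving
            (qmp_add_Ioc σ (max 0 (-σ)) (min T (T - σ)) 0 T ?_ ?_)
          · linarith [le_max_right (0:ℝ) (-σ)]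
          · linarith [min_le_right T (T - σ)]
        · exact hv1.mono_measure (Measure.restrict_mono
            (Set.Ioc_subset_Ioc (le_max_left _ _) (min_le_left _ _)) le_rfl)
      calc ∫⁻ t in Set.Ioc (max 0 (-σ)) (min T (T - σ)),
            (‖B (u (t + σ)) - B (u t)‖₊ : ℝ≥0∞)
          = eLpNorm (fun t => B (u (t + σ)) - B (u t)) 1
              (volume.restrict (Set.Ioc (max 0 (-σ)) (min T (T - σ)))) :=
            (eLpNorm_one_eq_lintegral_enorm (f := fun t => B (u (t + σ)) - B (u t))).symm
        _ ≤ eLpNorm (fun t => B (u (t + σ)) - B (u t)) p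
              (volume.restrict (Set.Ioc (max 0 (-σ)) (min T (T - σ)))) *
            (volume.restrict (Set.Ioc (max 0 (-σ)) (min T (T - σ)))) Set.univ
              ^ (1 / (1:ℝ≥0∞).toReal - 1 / p.toReal) :=
            eLpNorm_le_eLpNorm_mul_rpow_measure_univ hp haesm
        _ ≤ SupT * E := by
            refine mul_le_mul' ?_ ?_
            · rw [hSupT]
              exact le_biSup (fun σ => eLpNorm (fun t => B (u (t + σ)) - B (u t)) p
                (volume.restrict (Set.Ioc (max 0 (-σ)) (min T (T - σ)))))
                (Set.Ioc_subset_Icc_self hσ)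
            · rw [Measure.restrict_apply_univ, Real.volume_Ioc, he', hE]
              calc ENNReal.ofReal (min T (T - σ) - max 0 (-σ)) ^ (1 - 1/p).toReal
                  ≤ ENNReal.ofReal T ^ (1 - 1/p).toReal := by
                    refine ENNReal.rpow_le_rpow (ENNReal.ofReal_le_ofReal ?_)
                      ENNReal.toReal_nonneg
                    have := min_le_left T (T - σ)
                    have := le_max_left (0:ℝ) (-σ)
                    linarith
                _ = ENNReal.ofReal (T ^ (1 - 1/p).toReal) :=
                    ENNReal.ofReal_rpow_of_pos hT
    calc ∫⁻ s in Set.Ioc (0:ℝ) h, Xf s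
        = ∑ i ∈ Finset.range N, ∫⁻ s in Set.Ioc (0:ℝ) h,
            ∫⁻ t in Set.Ioc (t₁ + (i:ℝ)*h) (t₁ + ((i:ℝ)+1)*h),
              (‖B (u t) - B (u (t₁ + (i:ℝ)*h + s))‖₊ : ℝ≥0∞) := by
          simp only [hXf]
          exact lintegral_finset_sum' _
            (fun i hi => aemeasurable_lintegral_right (hfi i (Finset.mem_range.1 hi)))
      _ = ∑ i ∈ Finset.range N, ∫⁻ t in Set.Ioc (t₁ + (i:ℝ)*h) (t₁ + ((i:ℝ)+1)*h),
            ∫⁻ s in Set.Ioc (0:ℝ) h, (‖B (u t) - B (u (t₁ + (i:ℝ)*h + s))‖₊ : ℝ≥0∞) :=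
          Finset.sum_congr rfl
            (fun i hi => lintegral_lintegral_swap (hfi i (Finset.mem_range.1 hi)))
      _ = ∑ i ∈ Finset.range N, ∫⁻ t in Set.Ioc (t₁ + (i:ℝ)*h) (t₁ + ((i:ℝ)+1)*h),
            ∫⁻ σ in Set.Ioc (-h) h, gI i t σ := by
          refine Finset.sum_congr rfl (fun i hi => ?_)
          refine setLIntegral_congr_fun measurableSet_Ioc (fun t ht => ?_)
          have e1 := lintegral_Ioc_add
            (fun τ => (‖B (u t) - B (u τ)‖₊ : ℝ≥0∞)) (t₁ + (i:ℝ)*h) 0 h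
          rw [show t₁ + (i:ℝ)*h + 0 = t₁ + (i:ℝ)*h from by ring,
            show t₁ + (i:ℝ)*h + h = t₁ + ((i:ℝ)+1)*h from by ring] at e1
          have e2 := lintegral_Ioc_add (fun τ => (‖B (u t) - B (u τ)‖₊ : ℝ≥0∞)) t
            (t₁ + (i:ℝ)*h - t) (t₁ + ((i:ℝ)+1)*h - t)
          rw [show t + (t₁ + (i:ℝ)*h - t) = t₁ + (i:ℝ)*h from by ring,
            show t + (t₁ + ((i:ℝ)+1)*h - t) = t₁ + ((i:ℝ)+1)*h from by ring] at e2
          have hx : t₁ + ((i:ℝ)+1)*h = t₁ + (i:ℝ)*h + h := by ring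
          have hAsub : Set.Ioc (t₁ + (i:ℝ)*h - t) (t₁ + ((i:ℝ)+1)*h - t)
              ⊆ Set.Ioc (-h) h := by
            intro σ' hσ'
            exact ⟨by linarith [hσ'.1, ht.2], by linarith [hσ'.2, ht.1]⟩
          have hptw : ∀ σ', (Set.Ioc (t₁ + (i:ℝ)*h - t) (t₁ + ((i:ℝ)+1)*h - t)).indicator
              (fun σ'' => (‖B (u t) - B (u (t + σ''))‖₊ : ℝ≥0∞)) σ' = gI i t σ' := by
            intro σ'
            simp only [hgI]
            by_cases hσA : σ' ∈ Set.Ioc (t₁ + (i:ℝ)*h - t) (t₁ + ((i:ℝ)+1)*h - t)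
            · have hmem : t + σ' ∈ Set.Ioc (t₁ + (i:ℝ)*h) (t₁ + ((i:ℝ)+1)*h) :=
                ⟨by linarith [hσA.1], by linarith [hσA.2]⟩
              rw [Set.indicator_of_mem hσA, Set.indicator_of_mem hmem, one_mul]
              congr 1
              exact nnnorm_sub_rev _ _
            · have hnmem : t + σ' ∉ Set.Ioc (t₁ + (i:ℝ)*h) (t₁ + ((i:ℝ)+1)*h) := by
                intro hc; exact hσA ⟨by linarith [hc.1], by linarith [hc.2]⟩
              rw [Set.indicator_of_notMem hσA, Set.indicator_of_notMem hnmem, zero_mul]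
          calc ∫⁻ s in Set.Ioc (0:ℝ) h, (‖B (u t) - B (u (t₁ + (i:ℝ)*h + s))‖₊ : ℝ≥0∞)
              = ∫⁻ τ in Set.Ioc (t₁ + (i:ℝ)*h) (t₁ + ((i:ℝ)+1)*h),
                  (‖B (u t) - B (u τ)‖₊ : ℝ≥0∞) := e1.symm
            _ = ∫⁻ σ' in Set.Ioc (t₁ + (i:ℝ)*h - t) (t₁ + ((i:ℝ)+1)*h - t),
                  (‖B (u t) - B (u (t + σ'))‖₊ : ℝ≥0∞) := e2
            _ = ∫⁻ σ', (Set.Ioc (t₁ + (i:ℝ)*h - t) (t₁ + ((i:ℝ)+1)*h - t)).indicator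
                  (fun σ'' => (‖B (u t) - B (u (t + σ''))‖₊ : ℝ≥0∞)) σ' :=
                (lintegral_indicator measurableSet_Ioc _).symm
            _ = ∫⁻ σ', (Set.Ioc (-h) h).indicator
                  ((Set.Ioc (t₁ + (i:ℝ)*h - t) (t₁ + ((i:ℝ)+1)*h - t)).indicator
                    (fun σ'' => (‖B (u t) - B (u (t + σ''))‖₊ : ℝ≥0∞))) σ' := by
                refine lintegral_congr fun σ' => ?_
                by_cases hσB : σ' ∈ Set.Ioc (-h) h
                · rw [Set.indicator_of_mem hσB]
                · rw [Set.indicator_of_notMem hσB,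
                    Set.indicator_of_notMem (fun hc => hσB (hAsub hc))]
            _ = ∫⁻ σ' in Set.Ioc (-h) h,
                  (Set.Ioc (t₁ + (i:ℝ)*h - t) (t₁ + ((i:ℝ)+1)*h - t)).indicator
                    (fun σ'' => (‖B (u t) - B (u (t + σ''))‖₊ : ℝ≥0∞)) σ' :=
                lintegral_indicator measurableSet_Ioc _
            _ = ∫⁻ σ' in Set.Ioc (-h) h, gI i t σ' := lintegral_congr hptw
      _ = ∑ i ∈ Finset.range N, ∫⁻ σ in Set.Ioc (-h) h,
            ∫⁻ t in Set.Ioc (t₁ + (i:ℝ)*h) (t₁ + ((i:ℝ)+1)*h), gI i t σ :=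
          Finset.sum_congr rfl
            (fun i hi => lintegral_lintegral_swap (hgim i (Finset.mem_range.1 hi)))
      _ = ∫⁻ σ in Set.Ioc (-h) h, ∑ i ∈ Finset.range N,
            ∫⁻ t in Set.Ioc (t₁ + (i:ℝ)*h) (t₁ + ((i:ℝ)+1)*h), gI i t σ :=
          (lintegral_finset_sum' _ (fun i hi =>
            aemeasurable_lintegral_right ((hgim i (Finset.mem_range.1 hi)).prod_swap))).symm
      _ ≤ (SupT * E) * ENNReal.ofReal (2 * h) := by
          refine le_trans (setLIntegral_mono measurable_const hfinal) ?_
          rw [setLIntegral_const, Real.volume_Ioc, show h - (-h) = 2 * h from by ring]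
  -- final assembly
  have hofh : ENNReal.ofReal h ≠ 0 := (ENNReal.ofReal_pos.2 hh0).ne'
  have hofh' : ENNReal.ofReal h ≠ ⊤ := ENNReal.ofReal_ne_top
  calc (ENNReal.ofReal h)⁻¹ *
        ∫⁻ s in Set.Ioc (0:ℝ) h, ∫⁻ t in Set.Ioc t₁ t₂,
          (‖B (u t) - ∑ i ∈ Finset.range N,
              Set.indicator (Set.Ioc (t₁ + i * h) (t₁ + (i + 1) * h))
                (fun _ => B (truncAtHeight T M u (t₁ + i * h + s))) t‖₊ : ℝ≥0∞)
      ≤ (ENNReal.ofReal h)⁻¹ * ∫⁻ s in Set.Ioc (0:ℝ) h, (Xf s + Yf s) :=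
        mul_le_mul_right (lintegral_mono hstep1) _
    _ = (ENNReal.ofReal h)⁻¹ * ((∫⁻ s in Set.Ioc (0:ℝ) h, Xf s) +
          ∫⁻ s in Set.Ioc (0:ℝ) h, Yf s) := by
        rw [lintegral_add_right' _ hYmeas]
    _ ≤ (ENNReal.ofReal h)⁻¹ * ((SupT * E) * ENNReal.ofReal (2 * h)) +
          (ENNReal.ofReal h)⁻¹ * (ENNReal.ofReal h * (VG * Lr)) := by
        rw [mul_add]
        exact add_le_add (mul_le_mul_right hIntX _) (mul_le_mul_right hIntY _)
    _ = 2 * E * SupT + VG * Lr := by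
        have h2h : ENNReal.ofReal (2 * h) = 2 * ENNReal.ofReal h := by
          rw [ENNReal.ofReal_mul (by norm_num : (0:ℝ) ≤ 2), ENNReal.ofReal_ofNat]
        rw [h2h]
        have e1 : (ENNReal.ofReal h)⁻¹ * (SupT * E * (2 * ENNReal.ofReal h))
            = ((ENNReal.ofReal h)⁻¹ * ENNReal.ofReal h) * (2 * E * SupT) := by ring
        have e2 : (ENNReal.ofReal h)⁻¹ * (ENNReal.ofReal h * (VG * Lr))
            = ((ENNReal.ofReal h)⁻¹ * ENNReal.ofReal h) * (VG * Lr) := by ring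
        rw [e1, e2, ENNReal.inv_mul_cancel hofh hofh', one_mul, one_mul]
    _ ≤ 2 * E * SupT + 2 * VG * Lr := by
        refine add_le_add_right ?_ _
        rw [mul_assoc]
        exact le_mul_of_one_le_left zero_le (by norm_num)
end
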